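/- arXiv:1606.06749 — 8 statements merged into one kernel-verified Lean document; each statement's English description precedes it below -/
import Mathlib

section
/- Let Ω ⊂ ℝⁿ be an open path-connected set. Then Ω is 1-thick: there exists ε > 0 such that H^1_∞(Q(x,r) ∩ Ω) ≥ ε r for every x ∈ Ω and every r ∈ (0,1]. -/
open Metric Set MeasureTheory
open scoped ENNReal NNReal

/-- `H^d_δ(S)`: infimum of `Σ_j r_j^d` over countable coverings of `S` by
closed balls `B(x_j, r_j)` with radii `r_j < δ`. -/
noncomputable def hCont (n : ℕ) (d : ℝ) (δ : ℝ≥0∞) (S : Set (Fin n → ℝ)) : ℝ≥0∞ :=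
  ⨅ (c : ℕ → (Fin n → ℝ) × ℝ≥0) (_ : S ⊆ ⋃ j, closedBall (c j).1 ((c j).2 : ℝ))
    (_ : ∀ j, ((c j).2 : ℝ≥0∞) < δ), ∑' j, ((c j).2 : ℝ≥0∞) ^ d

/-- The `d`-Hausdorff content `H^d_∞(S)`. -/
noncomputable def hContent (n : ℕ) (d : ℝ) (S : Set (Fin n → ℝ)) : ℝ≥0∞ :=
  hCont n d ⊤ S

lemma hContent_mono (n : ℕ) (d : ℝ) {S T : Set (Fin n → ℝ)} (h : S ⊆ T) :
    hContent n d S ≤ hContent n d T := by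
  unfold hContent hCont
  exact le_iInf fun c => le_iInf fun hc => le_iInf fun hδ =>
    iInf_le_of_le c (iInf_le_of_le (h.trans hc) (iInf_le _ hδ))

lemma key (n : ℕ) {S : Set (Fin n → ℝ)} (hS : IsPreconnected S) {x b : Fin n → ℝ}
    (hx : x ∈ S) (hb : b ∈ S) {r : ℝ} (hr : 0 ≤ r) (hrb : r ≤ dist b x) :
    ENNReal.ofReal (r / 2) ≤ hContent n 1 (closedBall x r ∩ S) := by
  unfold hContent hCont
  refine le_iInf fun c => le_iInf fun hc => le_iInf fun _ => ?_
  have hIV : Icc (0 : ℝ) r ⊆ (fun z => dist z x) '' S := by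
    have h0 : dist x x = 0 := dist_self x
    have := hS.intermediate_value hx hb (f := fun z => dist z x)
      ((continuous_id.dist continuous_const).continuousOn)
    refine fun u hu => this ?_
    simp only [h0]
    exact ⟨hu.1, hu.2.trans hrb⟩
  have hcover : Icc (0 : ℝ) r ⊆ ⋃ j, closedBall (dist (c j).1 x) ((c j).2 : ℝ) := by
    intro u hu
    obtain ⟨z, hzS, hz⟩ := hIV hu
    simp only at hz
    have hz' : z ∈ closedBall x r := by
      rw [mem_closedBall, hz]; exact hu.2
    obtain ⟨j, hj⟩ := mem_iUnion.1 (hc ⟨hz', hzS⟩)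
    refine mem_iUnion.2 ⟨j, ?_⟩
    rw [mem_closedBall] at hj ⊢
    calc dist u (dist (c j).1 x) = |dist z x - dist (c j).1 x| := by
          rw [← hz, Real.dist_eq]
      _ ≤ dist z (c j).1 := abs_dist_sub_le _ _ _
      _ ≤ (c j).2 := hj
  have hmeas : ENNReal.ofReal r ≤ ∑' j, (2 : ℝ≥0∞) * ((c j).2 : ℝ≥0∞) := by
    have h1 : volume (Icc (0 : ℝ) r) ≤ ∑' j, volume (closedBall (dist (c j).1 x) ((c j).2 : ℝ)) :=
      (measure_mono hcover).trans (measure_iUnion_le _)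
    rw [Real.volume_Icc, sub_zero] at h1
    refine h1.trans (ENNReal.tsum_le_tsum fun j => ?_)
    rw [Real.volume_closedBall]
    rw [ENNReal.ofReal_mul (by norm_num)]
    simp [ENNReal.ofReal_coe_nnreal]
  rw [ENNReal.tsum_mul_left] at hmeas
  simp only [ENNReal.rpow_one]
  rw [ENNReal.ofReal_div_of_pos (by norm_num), ENNReal.ofReal_ofNat]
  rw [ENNReal.div_le_iff_le_mul (Or.inl (by norm_num)) (Or.inl (by norm_num))]
  rw [mul_comm] at hmeas
  exact hmeas

/-- Let `Ω ⊆ ℝⁿ` be an open path-connected set.  Then `Ω` is `1`-thick: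
there exists `ε > 0` such that `H^1_∞(Q(x,r) ∩ Ω) ≥ ε r` for every `x ∈ Ω` and every
`r ∈ (0,1]`.  Here `Q(x,r)` is the closed sup-norm cube of side `2r` centered at `x`. -/
theorem statement3 (n : ℕ) (hn : 1 ≤ n) (Ω : Set (Fin n → ℝ))
    (hopen : IsOpen Ω) (hpc : IsPathConnected Ω) :
    ∃ ε : ℝ, 0 < ε ∧ ∀ x ∈ Ω, ∀ r : ℝ, 0 < r → r ≤ 1 →
      ENNReal.ofReal (ε * r) ≤ hContent n 1 (closedBall x r ∩ Ω) := by
  obtain ⟨x₀, hx₀, -⟩ := id hpc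
  obtain ⟨ρ, hρ, hball⟩ := Metric.isOpen_iff.1 hopen x₀ hx₀
  set ρ' := ρ / 2 with hρ'def
  have hρ' : 0 < ρ' := by positivity
  set z : Fin n → ℝ := fun i => x₀ i + ρ' with hzdef
  have hzle : dist z x₀ ≤ ρ' := by
    rw [dist_pi_le_iff hρ'.le]
    intro i; simp [hzdef, Real.dist_eq, abs_of_nonneg hρ'.le]
  have hzge : ρ' ≤ dist z x₀ := by
    have := dist_le_pi_dist z x₀ ⟨0, hn⟩
    simpa [hzdef, Real.dist_eq, abs_of_nonneg hρ'.le] using this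
  have hzΩ : z ∈ Ω := hball (by rw [mem_ball]; exact hzle.trans_lt (by linarith))
  have hεnn : (0:ℝ) ≤ min (1/2) (ρ'/2) := le_min (by norm_num) (by positivity)
  refine ⟨min (1/2) (ρ'/2), lt_min (by norm_num) (by positivity), fun x hx r hr hr1 => ?_⟩
  by_cases hcase : ∃ y ∈ Ω, r < dist y x
  · obtain ⟨y, hy, hry⟩ := hcase
    obtain ⟨γ, hγ⟩ := hpc.joinedIn x hx y hy
    have hrange : range γ ⊆ Ω := by rintro _ ⟨t, rfl⟩; exact hγ t
    have hcon : IsPreconnected (range γ) := (isConnected_range γ.continuous).isPreconnected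
    have hxS : x ∈ range γ := ⟨0, γ.source⟩
    have hyS : y ∈ range γ := ⟨1, γ.target⟩
    have hk := key n hcon hxS hyS hr.le hry.le
    refine le_trans ?_ (hk.trans (hContent_mono n 1 (inter_subset_inter_right _ hrange)))
    apply ENNReal.ofReal_le_ofReal
    nlinarith [min_le_left (1/2:ℝ) (ρ'/2)]
  · push_neg at hcase
    have hsub : Ω ⊆ closedBall x r := fun y hy => by
      rw [mem_closedBall]; exact hcase y hy
    rw [inter_eq_self_of_subset_right hsub]
    have hk := key n hpc.isConnected.isPreconnected hx₀ hzΩ hρ'.le hzge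
    refine le_trans ?_ (hk.trans (hContent_mono n 1 inter_subset_right))
    apply ENNReal.ofReal_le_ofReal
    nlinarith [min_le_right (1/2:ℝ) (ρ'/2)]
end

section
/- Let ε, δ > 0 and let Ω ⊂ ℝⁿ be a path-connected (ε,δ)-domain. Then Ω is Ahlfors n-regular: there is a constant c > 0 such that L_n(Q(x,r) ∩ Ω) ≥ c r^n for all x ∈ Ω and r ∈ (0,1]. -/
/-!
Fix a closed cube `Q(x₀, ρ₀) ⊆ Ω`. Given `x ∈ Ω` and a small radius `r`, either `Ω ⊆ Q(x, r)`, and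
then `Q(x, r) ∩ Ω` contains the fixed cube, or, `Ω` being connected, some `y ∈ Ω` has
`‖y - x‖ = r`. On the path from `x` to `y` provided by the `(ε,δ)` condition there is a point `z`
with `‖z - x‖ = r/2`, hence `‖z - y‖ ≥ r/2`, so that `dist(z, ∂Ω) > εr/4`: a cube of side
comparable to `r` around `z` lies in `Q(x, r) ∩ Ω`.
-/

open Metric Set MeasureTheory

theorem IsPreconnected.exists_dist_eq {X : Type*} [PseudoMetricSpace X] {s : Set X}
    (hs : IsPreconnected s) {x p : X} (hx : x ∈ s) (hp : p ∈ s) {r : ℝ} (hr₀ : 0 ≤ r)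
    (hr : r ≤ dist p x) : ∃ y ∈ s, dist y x = r :=
  hs.intermediate_value hx hp (continuous_id.dist continuous_const).continuousOn
    ⟨by simpa using hr₀, hr⟩

theorem closedBall_subset_of_lt_infDist_frontier {E : Type*} [NormedAddCommGroup E]
    [NormedSpace ℝ E] {s : Set E} {z : E} (hz : z ∈ s) {ρ : ℝ}
    (hρ : ρ < infDist z (frontier s)) : closedBall z ρ ⊆ s := by
  rcases lt_or_ge ρ 0 with hneg | hρ₀
  · simp [closedBall_eq_empty.2 hneg]
  have hnf : ∀ w ∈ closedBall z ρ, w ∉ frontier s := fun w hw hwf =>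
    (infDist_le_dist_of_mem hwf).not_gt (lt_of_le_of_lt (mem_closedBall'.1 hw) hρ)
  have hint : closedBall z ρ ⊆ interior s :=
    (convex_closedBall z ρ).isPreconnected.subset_of_closure_inter_subset isOpen_interior
      ⟨z, mem_closedBall_self hρ₀,
        by_contra fun h => hnf z (mem_closedBall_self hρ₀) ⟨subset_closure hz, h⟩⟩
      fun w ⟨hwcl, hw⟩ => by_contra fun h => hnf w hw ⟨closure_mono interior_subset hwcl, h⟩
  exact hint.trans interior_subset

theorem ofReal_pow_le_volume_of_closedBall_subset {ι : Type*} [Fintype ι] {A : Set (ι → ℝ)}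
    {z : ι → ℝ} {ρ a : ℝ} (ha : 0 ≤ a) (haρ : a ≤ 2 * ρ) (h : closedBall z ρ ⊆ A) :
    ENNReal.ofReal (a ^ Fintype.card ι) ≤ volume A :=
  calc ENNReal.ofReal (a ^ Fintype.card ι)
      ≤ ENNReal.ofReal ((2 * ρ) ^ Fintype.card ι) :=
        ENNReal.ofReal_le_ofReal (pow_le_pow_left₀ ha haρ _)
    _ = volume (closedBall z ρ) := (Real.volume_pi_closedBall z (by linarith)).symm
    _ ≤ volume A := measure_mono h

section CigarPaths

variable {E : Type*} [NormedAddCommGroup E] [NormedSpace ℝ E]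

/-- The `(ε,δ)`-domain condition without the bound on the length of the paths. -/
def HasCigarPaths (ε δ : ℝ) (Ω : Set E) : Prop :=
  ∀ x ∈ Ω, ∀ y ∈ Ω, ‖x - y‖ < δ →
    ∃ γ : ℝ → E, ContinuousOn γ (Icc 0 1) ∧ γ 0 = x ∧ γ 1 = y ∧
      (∀ t ∈ Icc (0:ℝ) 1, γ t ∈ Ω) ∧
      (∀ t ∈ Icc (0:ℝ) 1, ε * (‖γ t - x‖ * ‖γ t - y‖) / ‖y - x‖ < infDist (γ t) (frontier Ω))

variable {ε δ : ℝ} {Ω : Set E}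

theorem HasCigarPaths.exists_closedBall_subset (hΩ : HasCigarPaths ε δ Ω) (hε : 0 < ε)
    {x y : E} (hx : x ∈ Ω) (hy : y ∈ Ω) {r : ℝ} (hr : 0 < r) (hyx : ‖y - x‖ = r)
    (hrδ : r < δ) : ∃ z, closedBall z (min ε 1 * r / 4) ⊆ closedBall x r ∩ Ω := by
  obtain ⟨γ, hγc, hγ0, hγ1, hγΩ, hγdist⟩ := hΩ x hx y hy (by rwa [norm_sub_rev, hyx])
  obtain ⟨_, ⟨t, ht, rfl⟩, hzx⟩ := (isPreconnected_Icc.image γ hγc).exists_dist_eq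
    ⟨0, left_mem_Icc.2 zero_le_one, hγ0⟩ ⟨1, right_mem_Icc.2 zero_le_one, hγ1⟩
    (half_pos hr).le (by rw [dist_eq_norm, hyx]; linarith)
  rw [dist_eq_norm] at hzx
  have hzy : r / 2 ≤ ‖γ t - y‖ := by
    linarith [norm_sub_le_norm_sub_add_norm_sub y (γ t) x, norm_sub_rev y (γ t)]
  have hfar : min ε 1 * r / 4 < infDist (γ t) (frontier Ω) :=
    calc min ε 1 * r / 4 ≤ ε * r / 4 := by gcongr; exact min_le_left _ _
      _ = ε * (r / 2 * (r / 2)) / r := by field_simp; ring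
      _ ≤ ε * (‖γ t - x‖ * ‖γ t - y‖) / ‖y - x‖ := by rw [hzx, hyx]; gcongr
      _ < infDist (γ t) (frontier Ω) := hγdist t ht
  refine ⟨γ t, subset_inter (closedBall_subset_closedBall' ?_)
    (closedBall_subset_of_lt_infDist_frontier (hγΩ t ht) hfar)⟩
  rw [dist_eq_norm, hzx]
  nlinarith [min_le_right ε 1]

theorem HasCigarPaths.subset_closedBall_or_exists_closedBall_subset
    (hΩ : HasCigarPaths ε δ Ω) (hε : 0 < ε) (hconn : IsPreconnected Ω) {x : E} (hx : x ∈ Ω)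
    {r : ℝ} (hr : 0 < r) (hrδ : r < δ) :
    Ω ⊆ closedBall x r ∨ ∃ z, closedBall z (min ε 1 * r / 4) ⊆ closedBall x r ∩ Ω := by
  refine or_iff_not_imp_left.2 fun hsub => ?_
  obtain ⟨p, hp, hpx⟩ := not_subset.1 hsub
  obtain ⟨y, hy, hyx⟩ := hconn.exists_dist_eq hx hp hr.le (not_le.1 hpx).le
  exact hΩ.exists_closedBall_subset hε hx hy hr (by rwa [← dist_eq_norm]) hrδ

end CigarPaths

/-- Let `ε, δ > 0` and let `Ω ⊆ ℝⁿ` be a path-connected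
`(ε,δ)`-domain: an open set such that for any `x, y ∈ Ω` with `‖x−y‖ < δ` there is a
rectifiable path `γ ⊆ Ω` of length `≤ ‖x−y‖/ε` joining `x` to `y` with
`dist(z, ∂Ω) > ε ‖z−x‖ ‖z−y‖ / ‖y−x‖` for every `z` on `γ`.  Then `Ω` is Ahlfors
`n`-regular: there is `c > 0` with `L_n(Q(x,r) ∩ Ω) ≥ c rⁿ` for all `x ∈ Ω`, `r ∈ (0,1]`. -/
theorem statement5 (n : ℕ) (ε δ : ℝ) (hε : 0 < ε) (hδ : 0 < δ)
    (Ω : Set (Fin n → ℝ)) (hopen : IsOpen Ω) (hpc : IsPathConnected Ω)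
    (hdom : ∀ x ∈ Ω, ∀ y ∈ Ω, ‖x - y‖ < δ →
      ∃ γ : ℝ → (Fin n → ℝ), ContinuousOn γ (Set.Icc 0 1) ∧ γ 0 = x ∧ γ 1 = y ∧
        (∀ t ∈ Set.Icc (0:ℝ) 1, γ t ∈ Ω) ∧
        eVariationOn γ (Set.Icc 0 1) ≤ ENNReal.ofReal (‖x - y‖ / ε) ∧
        (∀ t ∈ Set.Icc (0:ℝ) 1,
          ε * (‖γ t - x‖ * ‖γ t - y‖) / ‖y - x‖ < Metric.infDist (γ t) (frontier Ω))) :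
    ∃ c : ℝ, 0 < c ∧ ∀ x ∈ Ω, ∀ r : ℝ, 0 < r → r ≤ 1 →
      ENNReal.ofReal (c * r ^ n) ≤ MeasureTheory.volume (closedBall x r ∩ Ω) := by
  have hcigar : HasCigarPaths ε δ Ω := fun x hx y hy hxy => by
    obtain ⟨γ, hγc, hγ0, hγ1, hγΩ, -, hγdist⟩ := hdom x hx y hy hxy
    exact ⟨γ, hγc, hγ0, hγ1, hγΩ, hγdist⟩
  obtain ⟨x₀, hx₀⟩ := hpc.nonempty
  obtain ⟨ρ₀, hρ₀, hball₀⟩ := nhds_basis_closedBall.mem_iff.1 (hopen.mem_nhds hx₀)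
  set κ := min 1 (δ / 2)
  set b := min (2 * ρ₀) (min ε 1 / 2 * κ)
  refine ⟨b ^ n, by positivity, fun x hx r hr hr1 => ?_⟩
  have hκr : κ * r ≤ r := mul_le_of_le_one_left hr.le (min_le_left _ _)
  have hκrδ : κ * r < δ := by nlinarith [min_le_right 1 (δ / 2)]
  obtain ⟨z, ρ, hbρ, hsub⟩ : ∃ z ρ, b * r ≤ 2 * ρ ∧ closedBall z ρ ⊆ closedBall x r ∩ Ω := by
    rcases hcigar.subset_closedBall_or_exists_closedBall_subset hε hpc.isConnected.isPreconnected
      hx (by positivity) hκrδ with hΩsub | ⟨z, hz⟩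
    · refine ⟨x₀, ρ₀, ?_, subset_inter (hball₀.trans (hΩsub.trans ?_)) hball₀⟩
      · nlinarith [min_le_left (2 * ρ₀) (min ε 1 / 2 * κ), show 0 < b by positivity]
      · exact closedBall_subset_closedBall hκr
    · refine ⟨z, _, ?_, hz.trans (inter_subset_inter_left _ (closedBall_subset_closedBall hκr))⟩
      nlinarith [min_le_right (2 * ρ₀) (min ε 1 / 2 * κ)]
  simpa [mul_pow] using
    ofReal_pow_le_volume_of_closedBall_subset (by positivity : 0 ≤ b * r) hbρ hsub
end

section
/- Let d ∈ [0,n], γ ∈ (1,∞), α ≥ 0 with d ≥ n − α, and 0 < s < ∞. Let m be a Radon measure on ℝⁿ such that m(B(x,r)) ≤ C r^d for all x ∈ ℝⁿ and r > 0. Define the fractional maximal operator M^{<s}[f,α](x) = sup_{r ∈ (0,s)} r^α · (1/L_n(B(x,r))) ∫_{B(x,r)} |f| dL_n. Then M^{<s}[·,α] is bounded from L_γ(ℝⁿ, L_n) into L_γ(ℝⁿ, m), with operator norm depending only on γ, n, d, α, C. -/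
/-!
Fix `t > 0`. If `M^{<s}[f, α](x) > t`, some ball `B = B(x, r)` with `r < s` has
`r^α ⨍_B |f| > t`. Discarding the values `|f| ≤ t / (2 s^α)` lowers this weighted average by at
most `t / 2`, so `L_n(B) ≲ (r^α / t) ∫_B |f| 1{2 s^α |f| > t}`, and the growth bound
`m(B) ≤ C r^d ≤ C max(1, s^(d-n+α)) r^(n-α)` (this is where `d ≥ n - α` enters) turns it into
`m(B) ≲ t⁻¹ ∫_B |f| 1{2 s^α |f| > t}`. The Besicovitch covering theorem sorts these balls into
`N` disjoint families covering the level set, whence the weak-type bound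
`m{M f > t} ≲ t⁻¹ ∫_{2 s^α |f| > t} |f|`. Multiplying by `γ t^(γ-1)`, integrating in `t` and
exchanging the integrals gives the strong bound, since
`∫_0^{2 s^α |f|} t^(γ-2) dt = (2 s^α |f|)^(γ-1) / (γ - 1)`.
-/

open Filter Metric Set MeasureTheory Topology
open scoped ENNReal

theorem lintegral_Ioo_rpow_sub_one {β b : ℝ} (hβ : 0 < β) (hb : 0 ≤ b) :
    ∫⁻ t in Ioo 0 b, ENNReal.ofReal (t ^ (β - 1)) = ENNReal.ofReal (b ^ β / β) := by
  have hint : IntervalIntegrable (fun t : ℝ => t ^ (β - 1)) volume 0 b :=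
    intervalIntegral.intervalIntegrable_rpow' (by linarith)
  rw [← ofReal_integral_eq_lintegral_ofReal
      ((intervalIntegrable_iff_integrableOn_Ioo_of_le hb).1 hint)
      ((ae_restrict_iff' measurableSet_Ioo).2 (.of_forall fun t ht => Real.rpow_nonneg ht.1.le _)),
    ← integral_Ioc_eq_integral_Ioo, ← intervalIntegral.integral_of_le hb,
    integral_rpow (Or.inl (by linarith)), sub_add_cancel, Real.zero_rpow hβ.ne', sub_zero]

theorem lintegral_Ioi_rpow_sub_one_eq_top {β : ℝ} (hβ : 0 < β) :
    ∫⁻ t in Ioi 0, ENNReal.ofReal (t ^ (β - 1)) = ∞ := by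
  have hlim : Tendsto (fun b : ℝ => ENNReal.ofReal (b ^ β / β)) atTop (𝓝 ∞) :=
    ENNReal.tendsto_ofReal_atTop.comp ((tendsto_rpow_atTop hβ).atTop_div_const hβ)
  refine top_unique (le_of_tendsto hlim ?_)
  filter_upwards [eventually_ge_atTop 0] with b hb
  rw [← lintegral_Ioo_rpow_sub_one hβ hb]
  exact lintegral_mono_set Ioo_subset_Ioi_self

theorem lintegral_Ioi_indicator_rpow_sub_one (a : ℝ≥0∞) {β : ℝ} (hβ : 0 < β) :
    ∫⁻ t in Ioi 0,
        {t : ℝ | ENNReal.ofReal t < a}.indicator (fun t => ENNReal.ofReal (t ^ (β - 1))) t =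
      a ^ β / ENNReal.ofReal β := by
  have hmeas : MeasurableSet {t : ℝ | ENNReal.ofReal t < a} :=
    measurableSet_lt ENNReal.measurable_ofReal measurable_const
  rw [lintegral_indicator hmeas, Measure.restrict_restrict hmeas]
  rcases eq_or_ne a ∞ with rfl | ha
  · simp only [ENNReal.ofReal_lt_top, ofPred_true, univ_inter,
      lintegral_Ioi_rpow_sub_one_eq_top hβ, ENNReal.top_rpow_of_pos hβ,
      ENNReal.top_div_of_ne_top ENNReal.ofReal_ne_top]
  · have hset : {t : ℝ | ENNReal.ofReal t < a} ∩ Ioi 0 = Ioo 0 a.toReal := by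
      ext t
      simp only [mem_inter_iff, mem_ofPred_eq, mem_Ioi, mem_Ioo]
      constructor
      · rintro ⟨h, ht⟩
        exact ⟨ht, (ENNReal.ofReal_lt_iff_lt_toReal ht.le ha).1 h⟩
      · rintro ⟨ht, h⟩
        exact ⟨(ENNReal.ofReal_lt_iff_lt_toReal ht.le ha).2 h, ht⟩
    rw [hset, lintegral_Ioo_rpow_sub_one hβ ENNReal.toReal_nonneg,
      ENNReal.ofReal_div_of_pos hβ, ← ENNReal.ofReal_rpow_of_nonneg ENNReal.toReal_nonneg hβ.le,
      ENNReal.ofReal_toReal ha]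

theorem lintegral_Ioi_rpow_mul_indicator (a b : ℝ≥0∞) {p : ℝ} (hp : 1 < p) :
    ∫⁻ t in Ioi 0, ENNReal.ofReal (t ^ (p - 1 - 1)) *
        {t : ℝ | ENNReal.ofReal t < a * b}.indicator (fun _ => b) t =
      a ^ (p - 1) / ENNReal.ofReal (p - 1) * b ^ p := by
  have hind (t : ℝ) : ENNReal.ofReal (t ^ (p - 1 - 1)) *
      {t : ℝ | ENNReal.ofReal t < a * b}.indicator (fun _ => b) t =
        {t : ℝ | ENNReal.ofReal t < a * b}.indicator
          (fun t => ENNReal.ofReal (t ^ (p - 1 - 1))) t * b := by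
    simp only [Set.indicator_apply]
    split_ifs <;> simp [mul_comm]
  have hb : b ^ p = b ^ (p - 1) * b := by
    simpa using ENNReal.rpow_add_of_nonneg (x := b) (p - 1) 1 (by linarith) zero_le_one
  simp only [hind]
  rw [lintegral_mul_const _ (Measurable.indicator (by fun_prop)
      (measurableSet_lt ENNReal.measurable_ofReal measurable_const)),
    lintegral_Ioi_indicator_rpow_sub_one _ (by linarith),
    ENNReal.mul_rpow_of_nonneg _ _ (by linarith), hb, div_eq_mul_inv, div_eq_mul_inv]
  ring

theorem lintegral_rpow_eq_lintegral_meas_lt_mul_of_measurable {X : Type*} [MeasurableSpace X]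
    (μ : Measure X) [SigmaFinite μ] {F : X → ℝ≥0∞} (hF : Measurable F) {p : ℝ} (hp : 0 < p) :
    ∫⁻ x, F x ^ p ∂μ = ENNReal.ofReal p *
      ∫⁻ t in Ioi 0, μ {x | ENNReal.ofReal t < F x} * ENNReal.ofReal (t ^ (p - 1)) := by
  have hmeas : Measurable fun q : X × ℝ =>
      {t : ℝ | ENNReal.ofReal t < F q.1}.indicator (fun t => ENNReal.ofReal (t ^ (p - 1))) q.2 := by
    simp only [Set.indicator_apply, mem_ofPred_eq]
    exact Measurable.ite (measurableSet_lt (ENNReal.measurable_ofReal.comp measurable_snd)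
      (hF.comp measurable_fst)) (by fun_prop) measurable_const
  calc ∫⁻ x, F x ^ p ∂μ
      = ∫⁻ x, ENNReal.ofReal p * ∫⁻ t in Ioi 0,
          {t : ℝ | ENNReal.ofReal t < F x}.indicator (fun t => ENNReal.ofReal (t ^ (p - 1))) t
            ∂volume ∂μ := by
        simp only [lintegral_Ioi_indicator_rpow_sub_one _ hp,
          ENNReal.mul_div_cancel (ENNReal.ofReal_pos.2 hp).ne' ENNReal.ofReal_ne_top]
    _ = ENNReal.ofReal p * ∫⁻ t in Ioi (0 : ℝ), ∫⁻ x,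
          {t : ℝ | ENNReal.ofReal t < F x}.indicator (fun t => ENNReal.ofReal (t ^ (p - 1))) t
            ∂μ := by
        rw [lintegral_const_mul' _ _ ENNReal.ofReal_ne_top,
          lintegral_lintegral_swap hmeas.aemeasurable]
    _ = _ := by
        refine congrArg _ (lintegral_congr fun t => ?_)
        exact (lintegral_indicator_const (hF measurableSet_Ioi) _).trans (mul_comm _ _)

-- `F` need not be measurable (the maximal function is never shown to be): a measurable minorant
-- of `F ^ p` with the same integral reduces this to the measurable case.
theorem lintegral_rpow_le_lintegral_meas_lt_mul {X : Type*} [MeasurableSpace X]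
    (μ : Measure X) [SigmaFinite μ] (F : X → ℝ≥0∞) {p : ℝ} (hp : 0 < p) :
    ∫⁻ x, F x ^ p ∂μ ≤ ENNReal.ofReal p *
      ∫⁻ t in Ioi 0, μ {x | ENNReal.ofReal t < F x} * ENNReal.ofReal (t ^ (p - 1)) := by
  obtain ⟨G, hGm, hGF, hG⟩ := exists_measurable_le_lintegral_eq μ fun x => F x ^ p
  calc ∫⁻ x, F x ^ p ∂μ = ∫⁻ x, (G x ^ p⁻¹) ^ p ∂μ := by
        simp only [← ENNReal.rpow_mul, inv_mul_cancel₀ hp.ne', ENNReal.rpow_one, hG]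
    _ = ENNReal.ofReal p * ∫⁻ t in Ioi 0,
          μ {x | ENNReal.ofReal t < G x ^ p⁻¹} * ENNReal.ofReal (t ^ (p - 1)) :=
        lintegral_rpow_eq_lintegral_meas_lt_mul_of_measurable μ (hGm.pow_const _) hp
    _ ≤ _ := by
        gcongr with t x
        exact (ENNReal.rpow_inv_le_iff hp).2 (hGF x)

theorem lintegral_rpow_le_of_meas_lt_le {X Y : Type*} [MeasurableSpace X] [MeasurableSpace Y]
    (m : Measure X) [SigmaFinite m] (μ : Measure Y) [SigmaFinite μ] (F : X → ℝ≥0∞)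
    {φ : Y → ℝ≥0∞} (hφ : Measurable φ) {A c p : ℝ} (hA : 0 ≤ A) (hc : 0 ≤ c) (hp : 1 < p)
    (hF : ∀ t : ℝ, 0 < t → m {x | ENNReal.ofReal t < F x} ≤ ENNReal.ofReal (A / t) *
      ∫⁻ y, {y | ENNReal.ofReal t < ENNReal.ofReal c * φ y}.indicator φ y ∂μ) :
    ∫⁻ x, F x ^ p ∂m ≤ ENNReal.ofReal (p * A * (c ^ (p - 1) / (p - 1))) * ∫⁻ y, φ y ^ p ∂μ := by
  set g : ℝ → Y → ℝ≥0∞ := fun t => {y | ENNReal.ofReal t < ENNReal.ofReal c * φ y}.indicator φ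
  have hg : Measurable fun q : ℝ × Y => ENNReal.ofReal (q.1 ^ (p - 1 - 1)) * g q.1 q.2 := by
    simp only [g, Set.indicator_apply, mem_ofPred_eq]
    refine (by fun_prop : Measurable _).mul (Measurable.ite ?_ (by fun_prop) measurable_const)
    exact measurableSet_lt (by fun_prop) (measurable_const.mul (hφ.comp measurable_snd))
  have hlevel (t : ℝ) (ht : 0 < t) :
      m {x | ENNReal.ofReal t < F x} * ENNReal.ofReal (t ^ (p - 1)) ≤
        ENNReal.ofReal A * ∫⁻ y, ENNReal.ofReal (t ^ (p - 1 - 1)) * g t y ∂μ := by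
    have hconst : ENNReal.ofReal (A / t) * ENNReal.ofReal (t ^ (p - 1)) =
        ENNReal.ofReal A * ENNReal.ofReal (t ^ (p - 1 - 1)) := by
      rw [← ENNReal.ofReal_mul (by positivity), ← ENNReal.ofReal_mul hA,
        Real.rpow_sub ht (p - 1) 1, Real.rpow_one]
      congr 1
      field_simp
    grw [hF t ht]
    rw [lintegral_const_mul' _ _ ENNReal.ofReal_ne_top, mul_right_comm, hconst, mul_assoc]
  have hg_swap (t : ℝ) (y : Y) :
      g t y = {t : ℝ | ENNReal.ofReal t < ENNReal.ofReal c * φ y}.indicator (fun _ => φ y) t :=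
    rfl
  calc ∫⁻ x, F x ^ p ∂m
      ≤ ENNReal.ofReal p * ∫⁻ t in Ioi 0,
          m {x | ENNReal.ofReal t < F x} * ENNReal.ofReal (t ^ (p - 1)) :=
        lintegral_rpow_le_lintegral_meas_lt_mul m F (by linarith)
    _ ≤ ENNReal.ofReal p * ∫⁻ t in Ioi 0,
          ENNReal.ofReal A * ∫⁻ y, ENNReal.ofReal (t ^ (p - 1 - 1)) * g t y ∂μ := by
        gcongr 1
        exact setLIntegral_mono' measurableSet_Ioi hlevel
    _ = ENNReal.ofReal p * (ENNReal.ofReal A *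
          ∫⁻ y, (∫⁻ t in Ioi 0, ENNReal.ofReal (t ^ (p - 1 - 1)) * g t y) ∂μ) := by
        rw [lintegral_const_mul' _ _ ENNReal.ofReal_ne_top,
          lintegral_lintegral_swap hg.aemeasurable]
    _ = _ := by
        simp only [hg_swap, lintegral_Ioi_rpow_mul_indicator _ _ hp,
          ENNReal.ofReal_rpow_of_nonneg hc (by linarith : 0 ≤ p - 1),
          ← ENNReal.ofReal_div_of_pos (by linarith : 0 < p - 1)]
        rw [lintegral_const_mul' _ _ ENNReal.ofReal_ne_top, ← mul_assoc, ← mul_assoc,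
          ← ENNReal.ofReal_mul (by linarith), ← ENNReal.ofReal_mul (by positivity)]

theorem Real.rpow_le_max_one_rpow_mul_rpow {r s a b : ℝ} (hr : 0 < r) (hrs : r ≤ s)
    (hab : a ≤ b) : r ^ b ≤ max 1 (s ^ (b - a)) * r ^ a := by
  rw [← sub_add_cancel b a, Real.rpow_add hr, add_sub_cancel_right]
  gcongr
  rcases le_or_gt r 1 with hr1 | hr1
  · exact (Real.rpow_le_one hr.le hr1 (sub_nonneg.2 hab)).trans (le_max_left _ _)
  · exact (Real.rpow_le_rpow hr.le hrs (sub_nonneg.2 hab)).trans (le_max_right _ _)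

theorem le_indicator_lt_mul_add_ofReal_div {X : Type*} (φ : X → ℝ≥0∞) {K : ℝ} (hK : 0 < K)
    (t : ℝ) (y : X) :
    φ y ≤
      {y | ENNReal.ofReal t < ENNReal.ofReal K * φ y}.indicator φ y + ENNReal.ofReal (t / K) := by
  simp only [Set.indicator_apply, mem_ofPred_eq]
  split_ifs with hy
  · exact le_self_add
  · rw [zero_add, ENNReal.ofReal_div_of_pos hK,
      ENNReal.le_div_iff_mul_le (by simp [hK]) (by simp), mul_comm]
    exact not_lt.1 hy

-- Discarding the values of `φ` below `t / (2K)` lowers the `w`-weighted average over `B` by at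
-- most `t / 2`, so the rest still has weighted average above `t / 2`.
theorem measure_le_mul_setLIntegral_indicator_of_lt_mul_average {X : Type*} [MeasurableSpace X]
    {μ : Measure X} {B : Set X} (hB : μ B ≠ ∞) {φ : X → ℝ≥0∞} {w K t : ℝ} (hw : 0 ≤ w)
    (hwK : w ≤ K) (hK : 0 < K) (ht : 0 < t)
    (h : ENNReal.ofReal t < ENNReal.ofReal w * ((∫⁻ y in B, φ y ∂μ) / μ B)) :
    μ B ≤ ENNReal.ofReal (2 * w / t) *
      ∫⁻ y in B, {y | ENNReal.ofReal t < ENNReal.ofReal (2 * K) * φ y}.indicator φ y ∂μ := by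
  set g := {y | ENNReal.ofReal t < ENNReal.ofReal (2 * K) * φ y}.indicator φ
  rcases eq_or_ne (μ B) 0 with hB0 | hB0
  · simp [hB0]
  have hsplit : ∫⁻ y in B, φ y ∂μ ≤ ∫⁻ y in B, g y ∂μ + ENNReal.ofReal (t / (2 * K)) * μ B := by
    grw [lintegral_mono (le_indicator_lt_mul_add_ofReal_div φ (K := 2 * K) (by positivity) t),
      lintegral_add_right _ measurable_const, setLIntegral_const]
  have hwK' : ENNReal.ofReal w * ENNReal.ofReal (t / (2 * K)) ≤ ENNReal.ofReal (t / 2) := by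
    rw [← ENNReal.ofReal_mul hw]
    refine ENNReal.ofReal_le_ofReal ?_
    calc w * (t / (2 * K)) ≤ K * (t / (2 * K)) := by gcongr
      _ = t / 2 := by field_simp
  have hhalf : ENNReal.ofReal (t / 2) < ENNReal.ofReal w * (∫⁻ y in B, g y ∂μ) / μ B := by
    refine (ENNReal.add_lt_add_iff_right (ENNReal.ofReal_ne_top (r := t / 2))).1 ?_
    calc ENNReal.ofReal (t / 2) + ENNReal.ofReal (t / 2) = ENNReal.ofReal t := by
          rw [← ENNReal.ofReal_add (by positivity) (by positivity), add_halves]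
      _ < ENNReal.ofReal w * ((∫⁻ y in B, φ y ∂μ) / μ B) := h
      _ ≤ ENNReal.ofReal w *
            ((∫⁻ y in B, g y ∂μ + ENNReal.ofReal (t / (2 * K)) * μ B) / μ B) := by
          gcongr
      _ = ENNReal.ofReal w * (∫⁻ y in B, g y ∂μ) / μ B +
            ENNReal.ofReal w * ENNReal.ofReal (t / (2 * K)) := by
          rw [ENNReal.add_div, mul_div_assoc _ (μ B), ENNReal.div_self hB0 hB, mul_one, mul_add,
            mul_div_assoc]
      _ ≤ _ := by gcongr
  rw [ENNReal.lt_div_iff_mul_lt (.inl hB0) (.inl hB), mul_comm] at hhalf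
  calc μ B ≤ ENNReal.ofReal w * (∫⁻ y in B, g y ∂μ) / ENNReal.ofReal (t / 2) :=
        (ENNReal.le_div_iff_mul_le (.inl (by simp [ht])) (.inl ENNReal.ofReal_ne_top)).2 hhalf.le
    _ = ENNReal.ofReal (2 * w / t) * ∫⁻ y in B, g y ∂μ := by
        rw [ENNReal.mul_div_right_comm, ← ENNReal.ofReal_div_of_pos (by positivity)]
        congr 2
        field_simp

theorem Besicovitch.ne_zero_of_isEmpty_satelliteConfig {α : Type*} [MetricSpace α] [Nonempty α]
    {N : ℕ} {τ : ℝ} (hN : IsEmpty (SatelliteConfig α N τ)) : N ≠ 0 := by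
  rintro rfl
  inhabit α
  exact not_isEmpty_of_nonempty _ hN

theorem Besicovitch.measure_le_mul_lintegral_of_closedBall_le {α : Type*} [MetricSpace α]
    [TopologicalSpace.SeparableSpace α] [MeasurableSpace α] [OpensMeasurableSpace α]
    {N : ℕ} {τ : ℝ} (hτ : 1 < τ) (hN : IsEmpty (SatelliteConfig α N τ))
    (m μ : Measure α) {S : Set α} {ρ : α → ℝ} {R : ℝ} (hρ : ∀ x ∈ S, ρ x ∈ Ioc 0 R)
    (g : α → ℝ≥0∞) (c : ℝ≥0∞)
    (hball : ∀ x ∈ S, m (closedBall x (ρ x)) ≤ c * ∫⁻ y in closedBall x (ρ x), g y ∂μ) :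
    m S ≤ N * (c * ∫⁻ y, g y ∂μ) := by
  let P : BallPackage S α :=
    { c := (↑)
      r := fun x => ρ x
      rpos := fun x => (hρ x x.2).1
      r_bound := R
      r_le := fun x => (hρ x x.2).2 }
  obtain ⟨u, hu_disj, hu_cover⟩ := exist_disjoint_covering_families hτ hN P
  have hu_count (i : Fin N) : (u i).Countable :=
    (hu_disj i).countable_of_nonempty_interior fun j _ =>
      (nonempty_ball.2 (P.rpos j)).mono ball_subset_interior_closedBall
  have hfamily (i : Fin N) :
      m (⋃ j ∈ u i, closedBall (j : α) (ρ j)) ≤ c * ∫⁻ y, g y ∂μ :=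
    calc m (⋃ j ∈ u i, closedBall (j : α) (ρ j))
        ≤ ∑' j : u i, m (closedBall (j : α) (ρ j)) := measure_biUnion_le m (hu_count i) _
      _ ≤ ∑' j : u i, c * ∫⁻ y in closedBall (j : α) (ρ j), g y ∂μ :=
          ENNReal.tsum_le_tsum fun j => hball _ j.1.2
      _ = c * ∫⁻ y in ⋃ j ∈ u i, closedBall (j : α) (ρ j), g y ∂μ := by
          rw [ENNReal.tsum_mul_left,
            lintegral_biUnion (hu_count i) (fun _ _ => measurableSet_closedBall) (hu_disj i)]
      _ ≤ c * ∫⁻ y, g y ∂μ := by gcongr; exact Measure.restrict_le_self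
  have hcover : S ⊆ ⋃ i, ⋃ j ∈ u i, closedBall (j : α) (ρ j) := fun x hx => by
    have := hu_cover (mem_range_self (f := P.c) ⟨x, hx⟩)
    simp only [mem_iUnion] at this ⊢
    obtain ⟨i, j, hj, hxj⟩ := this
    exact ⟨i, j, hj, ball_subset_closedBall hxj⟩
  calc m S ≤ ∑ i, m (⋃ j ∈ u i, closedBall (j : α) (ρ j)) :=
        (measure_mono hcover).trans (measure_iUnion_fintype_le m _)
    _ ≤ ∑ _i : Fin N, c * ∫⁻ y, g y ∂μ := Finset.sum_le_sum fun i _ => hfamily i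
    _ = N * (c * ∫⁻ y, g y ∂μ) := by simp

-- The paper's `M^{<s}[f, α]` is `fracMaximal volume α s (fun y => ENNReal.ofReal |f y|)`.
noncomputable def fracMaximal {X : Type*} [PseudoMetricSpace X] [MeasurableSpace X]
    (μ : Measure X) (α s : ℝ) (φ : X → ℝ≥0∞) (x : X) : ℝ≥0∞ :=
  ⨆ r ∈ Ioo 0 s, ENNReal.ofReal (r ^ α) *
    ((∫⁻ y in closedBall x r, φ y ∂μ) / μ (closedBall x r))

section AddHaar

open Module

variable {E : Type*} [NormedAddCommGroup E] [NormedSpace ℝ E] [FiniteDimensional ℝ E]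
  [MeasurableSpace E] [BorelSpace E] (μ : Measure E) [μ.IsAddHaarMeasure] (m : Measure E)
  {d α s C : ℝ}

-- `max 1 (s ^ (d - (n - α)))` bounds `r ^ (d - (n - α))` for `r ≤ s`, and `μ (ball 0 1)` turns
-- `r ^ n` into `μ (closedBall x r)`.
theorem measure_closedBall_le_mul_setLIntegral_indicator (hα : 0 ≤ α)
    (hda : finrank ℝ E - α ≤ d) (hC : 0 ≤ C)
    (hm : ∀ x r, 0 < r → m (closedBall x r) ≤ ENNReal.ofReal (C * r ^ d))
    (φ : E → ℝ≥0∞) {x : E} {r t : ℝ} (hr : 0 < r) (hrs : r ≤ s) (ht : 0 < t)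
    (h : ENNReal.ofReal t <
      ENNReal.ofReal (r ^ α) * ((∫⁻ y in closedBall x r, φ y ∂μ) / μ (closedBall x r))) :
    m (closedBall x r) ≤
      ENNReal.ofReal (2 * C * max 1 (s ^ (d - (finrank ℝ E - α))) / μ.real (ball 0 1) / t) *
        ∫⁻ y in closedBall x r,
          {y | ENNReal.ofReal t < ENNReal.ofReal (2 * s ^ α) * φ y}.indicator φ y ∂μ := by
  set κ := max 1 (s ^ (d - (finrank ℝ E - α)))
  set c₀ := μ.real (ball 0 1)
  have hc₀ : 0 < c₀ :=
    ENNReal.toReal_pos (measure_ball_pos μ 0 one_pos).ne' measure_ball_lt_top.ne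
  have hV : μ (closedBall x r) = ENNReal.ofReal (r ^ finrank ℝ E * c₀) := by
    rw [← Measure.addHaar_real_closedBall μ x hr.le,
      ofReal_measureReal measure_closedBall_lt_top.ne]
  have hrα : 0 < r ^ α := Real.rpow_pos_of_pos hr α
  have hball := measure_le_mul_setLIntegral_indicator_of_lt_mul_average
    measure_closedBall_lt_top.ne hrα.le (Real.rpow_le_rpow hr.le hrs hα)
    (Real.rpow_pos_of_pos (hr.trans_le hrs) α) ht h
  calc m (closedBall x r) ≤ ENNReal.ofReal (C * r ^ d) := hm x r hr
    _ ≤ ENNReal.ofReal (C * κ / (r ^ α * c₀)) * μ (closedBall x r) := by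
        rw [hV, ← ENNReal.ofReal_mul (by positivity)]
        refine ENNReal.ofReal_le_ofReal ?_
        calc C * r ^ d ≤ C * (κ * r ^ (finrank ℝ E - α)) := by
              gcongr
              exact Real.rpow_le_max_one_rpow_mul_rpow hr hrs hda
          _ = C * κ / (r ^ α * c₀) * (r ^ finrank ℝ E * c₀) := by
              rw [Real.rpow_sub hr, Real.rpow_natCast]
              field_simp
    _ ≤ _ := by
        grw [hball, ← mul_assoc, ← ENNReal.ofReal_mul (by positivity)]
        gcongr
        apply le_of_eq
        field_simp

theorem meas_lt_fracMaximal_le {N : ℕ} {τ : ℝ} (hτ : 1 < τ)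
    (hN : IsEmpty (Besicovitch.SatelliteConfig E N τ)) (hα : 0 ≤ α)
    (hda : finrank ℝ E - α ≤ d) (hC : 0 ≤ C)
    (hm : ∀ x r, 0 < r → m (closedBall x r) ≤ ENNReal.ofReal (C * r ^ d))
    (φ : E → ℝ≥0∞) {t : ℝ} (ht : 0 < t) :
    m {x | ENNReal.ofReal t < fracMaximal μ α s φ x} ≤
      N * (ENNReal.ofReal (2 * C * max 1 (s ^ (d - (finrank ℝ E - α))) / μ.real (ball 0 1) / t) *
        ∫⁻ y, {y | ENNReal.ofReal t < ENNReal.ofReal (2 * s ^ α) * φ y}.indicator φ y ∂μ) := by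
  have hradius : ∀ x ∈ {x | ENNReal.ofReal t < fracMaximal μ α s φ x}, ∃ r ∈ Ioc 0 s,
      m (closedBall x r) ≤
        ENNReal.ofReal (2 * C * max 1 (s ^ (d - (finrank ℝ E - α))) / μ.real (ball 0 1) / t) *
          ∫⁻ y in closedBall x r,
            {y | ENNReal.ofReal t < ENNReal.ofReal (2 * s ^ α) * φ y}.indicator φ y ∂μ := by
    intro x hx
    simp only [mem_ofPred_eq, fracMaximal, lt_iSup_iff] at hx
    obtain ⟨r, hr, h⟩ := hx
    exact ⟨r, ⟨hr.1, hr.2.le⟩,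
      measure_closedBall_le_mul_setLIntegral_indicator μ m hα hda hC hm φ hr.1 hr.2.le ht h⟩
  choose! ρ hρ hball using hradius
  exact Besicovitch.measure_le_mul_lintegral_of_closedBall_le hτ hN m μ hρ _ _ hball

theorem lintegral_fracMaximal_rpow_le {N : ℕ} {τ : ℝ} (hτ : 1 < τ)
    (hN : IsEmpty (Besicovitch.SatelliteConfig E N τ)) [SigmaFinite m] {γ : ℝ} (hγ : 1 < γ)
    (hα : 0 ≤ α) (hda : finrank ℝ E - α ≤ d) (hs : 0 ≤ s) (hC : 0 ≤ C)
    (hm : ∀ x r, 0 < r → m (closedBall x r) ≤ ENNReal.ofReal (C * r ^ d))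
    {φ : E → ℝ≥0∞} (hφ : Measurable φ) :
    ∫⁻ x, fracMaximal μ α s φ x ^ γ ∂m ≤
      ENNReal.ofReal (γ * (N * (2 * C * max 1 (s ^ (d - (finrank ℝ E - α))) / μ.real (ball 0 1)))
        * ((2 * s ^ α) ^ (γ - 1) / (γ - 1))) * ∫⁻ y, φ y ^ γ ∂μ := by
  refine lintegral_rpow_le_of_meas_lt_le m μ _ hφ (by positivity) (by positivity) hγ
    fun t ht => ?_
  grw [meas_lt_fracMaximal_le μ m hτ hN hα hda hC hm φ ht]
  rw [← mul_assoc, ← ENNReal.ofReal_natCast, ← ENNReal.ofReal_mul (by positivity)]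
  gcongr
  exact le_of_eq (by ring)

end AddHaar

theorem statement6_general (n : ℕ) (d γ α : ℝ) (hγ : 1 < γ)
    (hα : 0 ≤ α) (hda : (n : ℝ) - α ≤ d) (s : ℝ) (hs : 0 < s)
    (C : ℝ) (hC : 0 < C) :
    ∃ C' : ℝ, 0 < C' ∧
      ∀ m : Measure (Fin n → ℝ), m.Regular →
        (∀ (x : Fin n → ℝ) (r : ℝ), 0 < r → m (closedBall x r) ≤ ENNReal.ofReal (C * r ^ d)) →
        ∀ f : (Fin n → ℝ) → ℝ, Measurable f →
          (∫⁻ x, (⨆ r ∈ Set.Ioo (0:ℝ) s, ENNReal.ofReal (r ^ α) *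
                ((∫⁻ y in closedBall x r, ENNReal.ofReal |f y| ∂volume) /
                  volume (closedBall x r))) ^ γ ∂m) ^ (1/γ)
            ≤ ENNReal.ofReal C' * (∫⁻ x, ENNReal.ofReal |f x| ^ γ ∂volume) ^ (1/γ) := by
  obtain ⟨N, τ, hτ, hN⟩ := HasBesicovitchCovering.no_satelliteConfig (α := Fin n → ℝ)
  have hN0 : (0 : ℝ) < N :=
    Nat.cast_pos.2 (Nat.pos_of_ne_zero (Besicovitch.ne_zero_of_isEmpty_satelliteConfig hN))
  have hda' : (Module.finrank ℝ (Fin n → ℝ) : ℝ) - α ≤ d := by rwa [Module.finrank_fin_fun]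
  have hball : 0 < volume.real (ball (0 : Fin n → ℝ) 1) :=
    ENNReal.toReal_pos (measure_ball_pos volume 0 one_pos).ne' measure_ball_lt_top.ne
  set B := γ * (N * (2 * C * max 1 (s ^ (d - (Module.finrank ℝ (Fin n → ℝ) - α))) /
    volume.real (ball (0 : Fin n → ℝ) 1))) * ((2 * s ^ α) ^ (γ - 1) / (γ - 1))
  have hB : 0 < B := by
    have : 0 < γ - 1 := by linarith
    positivity
  refine ⟨B ^ (1 / γ), by positivity, fun m _ hm f hf => ?_⟩
  calc _ ≤ (ENNReal.ofReal B * ∫⁻ x, ENNReal.ofReal |f x| ^ γ) ^ (1 / γ) :=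
        ENNReal.rpow_le_rpow (lintegral_fracMaximal_rpow_le volume m hτ hN hγ hα hda' hs.le
          hC.le hm (by fun_prop)) (by positivity)
    _ = _ := by
        rw [ENNReal.mul_rpow_of_nonneg _ _ (by positivity), ENNReal.ofReal_rpow_of_pos hB]

/-- Let `d ∈ [0,n]`, `γ ∈ (1,∞)`, `α ≥ 0` with `d ≥ n − α`, and
`0 < s < ∞`.  Then there is a constant `C'` (depending only on `γ, n, d, α, C`) such
that for every Radon measure `m` on `ℝⁿ` satisfying `m(B(x,r)) ≤ C r^d` for all `x, r`,
the fractional maximal operator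
`M^{<s}[f,α](x) = sup_{r ∈ (0,s)} r^α ⨍_{B(x,r)} |f| dL_n`
is bounded from `L_γ(ℝⁿ, L_n)` into `L_γ(ℝⁿ, m)` with norm at most `C'`. -/
theorem statement6 (n : ℕ) (d γ α : ℝ) (hd0 : 0 ≤ d) (hdn : d ≤ n) (hγ : 1 < γ)
    (hα : 0 ≤ α) (hda : (n : ℝ) - α ≤ d) (s : ℝ) (hs : 0 < s)
    (C : ℝ) (hC : 0 < C) :
    ∃ C' : ℝ, 0 < C' ∧
      ∀ m : Measure (Fin n → ℝ), m.Regular →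
        (∀ (x : Fin n → ℝ) (r : ℝ), 0 < r → m (closedBall x r) ≤ ENNReal.ofReal (C * r ^ d)) →
        ∀ f : (Fin n → ℝ) → ℝ, Measurable f →
          (∫⁻ x, (⨆ r ∈ Set.Ioo (0:ℝ) s, ENNReal.ofReal (r ^ α) *
                ((∫⁻ y in closedBall x r, ENNReal.ofReal |f y| ∂volume) /
                  volume (closedBall x r))) ^ γ ∂m) ^ (1/γ)
            ≤ ENNReal.ofReal C' * (∫⁻ x, ENNReal.ofReal |f x| ^ γ ∂volume) ^ (1/γ) :=
  statement6_general n d γ α hγ hα hda s hs C hC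
end

section
/- Let d ∈ [0,n], S ⊂ ℝⁿ closed with d-regular system of measures {μ_k}, and for r > 0 let k(r) be the unique integer with r ∈ [2^{-k(r)}, 2^{-k(r)+1}). Then there exists C > 0 such that for every x ∈ S, r ∈ (0,1), and every Borel set G ⊂ Q(x,r) ∩ S: L_n(G)/L_n(Q(x,r)) ≤ C · μ_{k(r)}(G)/μ_{k(r)}(Q(x,r) ∩ S). -/
/-!
Fix a dyadic scale `t = 2^{-j}` with `j ≥ k` and a compact `K ⊆ S`. Integrating the lower bound
`μ_j(B(y, t)) ≥ C₂ t^d` over `y ∈ K` and double counting gives `C₂ t^d L(K) ≤ (2t)^n μ_j(K_t)`,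
where `K_t` is the closed `t`-thickening; passing from `μ_j` to `μ_k` costs `2^{(n-d)(j-k)}`,
and the powers of `t` cancel, leaving `L(K) ≤ 2^n 2^{-k(n-d)} C₂⁻¹ μ_k(K_t)`. Letting `j → ∞` and
using inner regularity of Lebesgue measure, `L(G) ≤ 2^n 2^{-k(n-d)} C₂⁻¹ μ_k(G)`. On the other side
`μ_k(Q(x,r)) ≤ 2^{n-d} μ_{k-1}(Q(x,r)) ≤ 2^{n-d} C₁ r^d` since `r < 2^{-(k-1)}`, and since
`2^{-k} ≤ r` the two bounds combine with `C = 2^n C₁ / C₂`.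
-/

open Metric Set MeasureTheory
open scoped ENNReal NNReal

/-- A `d`-regular system of measures on `S` with constants `C₁, C₂`:
Borel measures `μ_k` supported in `S` such that
(1) `μ_k(B(x,r)) ≤ C₁ r^d` for all `x ∈ ℝⁿ`, `r ∈ (0, 2^{-k}]`;
(2) `μ_k(B(x, 2^{-k})) ≥ C₂ 2^{-kd}` for all `x ∈ S`;
(3) `2^{d−n} μ_{k+1}(G) ≤ μ_k(G) ≤ μ_{k+1}(G)` for every Borel `G ⊆ S`. -/
def IsDRegularSystem (n : ℕ) (d : ℝ) (S : Set (Fin n → ℝ))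
    (μ : ℕ → Measure (Fin n → ℝ)) (C₁ C₂ : ℝ) : Prop :=
  (∀ k, μ k Sᶜ = 0) ∧
  (∀ k : ℕ, ∀ x : Fin n → ℝ, ∀ r : ℝ, 0 < r → r ≤ (2:ℝ)^(-(k:ℤ)) →
      μ k (closedBall x r) ≤ ENNReal.ofReal (C₁ * r ^ d)) ∧
  (∀ k : ℕ, ∀ x ∈ S,
      ENNReal.ofReal (C₂ * ((2:ℝ)^(-(k:ℤ))) ^ d) ≤ μ k (closedBall x ((2:ℝ)^(-(k:ℤ))))) ∧
  (∀ k : ℕ, ∀ G ⊆ S, MeasurableSet G →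
      ENNReal.ofReal ((2:ℝ) ^ (d - n)) * μ (k+1) G ≤ μ k G ∧ μ k G ≤ μ (k+1) G)

open Filter Topology

lemma isLocallyFiniteMeasure_of_measure_closedBall_lt_top {α : Type*} [PseudoMetricSpace α]
    [MeasurableSpace α] {ν : Measure α} (h : ∀ x, ∃ r > 0, ν (closedBall x r) < ∞) :
    IsLocallyFiniteMeasure ν :=
  ⟨fun x => let ⟨r, hr, hx⟩ := h x; ⟨closedBall x r, closedBall_mem_nhds x hr, hx⟩⟩

lemma ENNReal.le_pow_sub_mul_of_forall_succ_le {f : ℕ → ℝ≥0∞} {a : ℝ≥0∞}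
    (h : ∀ k, f (k + 1) ≤ a * f k) {k j : ℕ} (hkj : k ≤ j) : f j ≤ a ^ (j - k) * f k := by
  induction j, hkj using Nat.le_induction with
  | base => simp
  | succ j hkj ih =>
    calc f (j + 1) ≤ a * f j := h j
      _ ≤ a * (a ^ (j - k) * f k) := by gcongr
      _ = a ^ (j + 1 - k) * f k := by rw [Nat.sub_add_comm hkj, pow_succ']; ring

/-- Double counting the pairs `(y, z)` with `y ∈ K` and `dist y z ≤ ρ`. -/
lemma setLIntegral_measure_closedBall_le {α : Type*} [PseudoMetricSpace α] [MeasurableSpace α]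
    [OpensMeasurableSpace α] [SecondCountableTopology α] {μ ν : Measure α} [SFinite μ]
    [SFinite ν] {K : Set α} (hK : MeasurableSet K) {ρ : ℝ} {V : ℝ≥0∞}
    (hV : ∀ z, μ (closedBall z ρ) ≤ V) :
    ∫⁻ y in K, ν (closedBall y ρ) ∂μ ≤ V * ν (cthickening ρ K) := by
  set A : Set (α × α) := {p | p.1 ∈ K ∧ dist p.2 p.1 ≤ ρ}
  have hA : MeasurableSet A := (measurable_fst hK).inter
    (isClosed_le (continuous_snd.dist continuous_fst) continuous_const).measurableSet
  have hfst : ∫⁻ y in K, ν (closedBall y ρ) ∂μ = μ.prod ν A := by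
    rw [Measure.prod_apply hA, ← lintegral_indicator hK]
    congr 1 with y
    by_cases hy : y ∈ K <;> simp [A, hy, closedBall]
  have hsnd : μ.prod ν A = ∫⁻ z, μ (K ∩ closedBall z ρ) ∂ν := by
    rw [Measure.prod_apply_symm hA]
    congr 1 with z
    congr 1 with y
    simp [A, dist_comm]
  rw [hfst, hsnd, ← lintegral_indicator_const isClosed_cthickening.measurableSet]
  refine lintegral_mono fun z => ?_
  by_cases hz : z ∈ cthickening ρ K
  · rw [indicator_of_mem hz]
    exact (measure_mono inter_subset_right).trans (hV z)
  · have hempty : K ∩ closedBall z ρ = ∅ := eq_empty_of_forall_notMem fun y hy =>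
      hz (mem_cthickening_of_dist_le z y ρ K hy.1 (by rw [dist_comm]; exact hy.2))
    simp [hempty]

lemma ENNReal.div_le_mul_div_of_le {a b c C U V m : ℝ≥0∞} (ha : a ≤ c * b)
    (hcU : c * U ≤ C * V) (hm : m ≤ U) (hU₀ : U ≠ 0) (hU : U ≠ ∞) (hV₀ : V ≠ 0) (hV : V ≠ ∞) :
    a / V ≤ C * (b / m) := by
  rw [ENNReal.div_le_iff hV₀ hV]
  calc a ≤ c * b := ha
    _ = c * U * (b / U) := by rw [mul_assoc, ENNReal.mul_div_cancel hU₀ hU]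
    _ ≤ C * V * (b / m) := by gcongr
    _ = C * (b / m) * V := by ring

lemma two_mul_zpow_pow_mul_rpow_pow {n k j : ℕ} (d : ℝ) (hkj : k ≤ j) :
    (2 * (2 : ℝ) ^ (-(j : ℤ))) ^ n * (2 ^ ((n : ℝ) - d)) ^ (j - k) =
      ((2 : ℝ) ^ (-(j : ℤ))) ^ d * (2 ^ n * ((2 : ℝ) ^ (-(k : ℤ))) ^ ((n : ℝ) - d)) := by
  set t : ℝ := (2 : ℝ) ^ (-(j : ℤ))
  set u : ℝ := (2 : ℝ) ^ (-(k : ℤ))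
  have ht : 0 < t := by positivity
  have hut : u / t = 2 ^ (j - k) := by
    rw [← zpow_sub₀ two_ne_zero, ← zpow_natCast, Nat.cast_sub hkj]
    ring_nf
  have htn : t ^ n = t ^ ((n : ℝ) - d) * t ^ d := by
    rw [← Real.rpow_natCast, ← Real.rpow_add ht]
    ring_nf
  rw [Real.rpow_pow_comm two_pos.le, ← hut, Real.div_rpow (by positivity) ht.le, mul_pow, htn]
  field_simp

lemma tendsto_two_zpow_neg_atTop_nhds_zero :
    Tendsto (fun j : ℕ => (2 : ℝ) ^ (-(j : ℤ))) atTop (𝓝 0) := by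
  simp only [zpow_neg, zpow_natCast]
  exact tendsto_inv_atTop_zero.comp (tendsto_pow_atTop_atTop_of_one_lt one_lt_two)

lemma two_pow_mul_rpow_mul_le {n : ℕ} {d C₁ C₂ u r : ℝ} (hd0 : 0 ≤ d) (hdn : d ≤ n)
    (hC₁ : 0 ≤ C₁) (hC₂ : 0 < C₂) (hu : 0 < u) (hur : u ≤ r) :
    2 ^ n * u ^ ((n : ℝ) - d) / C₂ * (2 ^ ((n : ℝ) - d) * (C₁ * r ^ d)) ≤
      2 ^ n * C₁ / C₂ * (2 * r) ^ n := by
  have hr : 0 < r := hu.trans_le hur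
  have hsplit : (2 * r) ^ n = (2 * r) ^ ((n : ℝ) - d) * (2 * r) ^ d := by
    rw [← Real.rpow_natCast, ← Real.rpow_add (by positivity)]
    ring_nf
  have hdom : (2 * u) ^ ((n : ℝ) - d) * r ^ d ≤ (2 * r) ^ ((n : ℝ) - d) * (2 * r) ^ d := by
    gcongr
    linarith
  calc 2 ^ n * u ^ ((n : ℝ) - d) / C₂ * (2 ^ ((n : ℝ) - d) * (C₁ * r ^ d))
      = 2 ^ n * C₁ / C₂ * ((2 * u) ^ ((n : ℝ) - d) * r ^ d) := by
        rw [Real.mul_rpow two_pos.le hu.le]; ring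
    _ ≤ 2 ^ n * C₁ / C₂ * (2 * r) ^ n := by rw [hsplit]; gcongr

namespace IsDRegularSystem

variable {n : ℕ} {d : ℝ} {S : Set (Fin n → ℝ)} {μ : ℕ → Measure (Fin n → ℝ)} {C₁ C₂ : ℝ}

lemma isLocallyFiniteMeasure (h : IsDRegularSystem n d S μ C₁ C₂) (k : ℕ) :
    IsLocallyFiniteMeasure (μ k) :=
  isLocallyFiniteMeasure_of_measure_closedBall_lt_top fun x =>
    ⟨_, by positivity, (h.2.1 k x _ (by positivity) le_rfl).trans_lt ENNReal.ofReal_lt_top⟩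

lemma measure_succ_le (h : IsDRegularSystem n d S μ C₁ C₂) (hS : MeasurableSet S) (k : ℕ)
    {A : Set (Fin n → ℝ)} (hA : MeasurableSet A) :
    μ (k + 1) A ≤ ENNReal.ofReal (2 ^ ((n : ℝ) - d)) * μ k A := by
  have hinv : ENNReal.ofReal (2 ^ ((n : ℝ) - d)) * ENNReal.ofReal (2 ^ (d - n)) = 1 := by
    rw [← ENNReal.ofReal_mul (by positivity), ← Real.rpow_add two_pos]
    simp
  rw [← measure_inter_conull (h.1 (k + 1)), ← measure_inter_conull (s := A) (h.1 k)]
  calc μ (k + 1) (A ∩ S)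
      = ENNReal.ofReal (2 ^ ((n : ℝ) - d)) *
          (ENNReal.ofReal (2 ^ (d - n)) * μ (k + 1) (A ∩ S)) := by
        rw [← mul_assoc, hinv, one_mul]
    _ ≤ ENNReal.ofReal (2 ^ ((n : ℝ) - d)) * μ k (A ∩ S) := by
        gcongr
        exact (h.2.2.2 k _ inter_subset_right (hA.inter hS)).1

lemma measure_le_pow_mul (h : IsDRegularSystem n d S μ C₁ C₂) (hS : MeasurableSet S)
    {A : Set (Fin n → ℝ)} (hA : MeasurableSet A) {k j : ℕ} (hkj : k ≤ j) :
    μ j A ≤ ENNReal.ofReal (2 ^ ((n : ℝ) - d)) ^ (j - k) * μ k A :=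
  ENNReal.le_pow_sub_mul_of_forall_succ_le (f := fun i => μ i A)
    (fun i => h.measure_succ_le hS i hA) hkj

lemma measure_succ_closedBall_le (h : IsDRegularSystem n d S μ C₁ C₂) (hS : MeasurableSet S)
    {m : ℕ} (x : Fin n → ℝ) {r : ℝ} (hr : 0 < r) (hrm : r ≤ (2 : ℝ) ^ (-(m : ℤ))) :
    μ (m + 1) (closedBall x r) ≤ ENNReal.ofReal (2 ^ ((n : ℝ) - d) * (C₁ * r ^ d)) := by
  rw [ENNReal.ofReal_mul (by positivity)]
  exact (h.measure_succ_le hS m measurableSet_closedBall).trans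
    (by gcongr; exact h.2.1 m x r hr hrm)

lemma ofReal_mul_volume_le (h : IsDRegularSystem n d S μ C₁ C₂) (hS : MeasurableSet S)
    {K : Set (Fin n → ℝ)} (hK : IsCompact K) (hKS : K ⊆ S) {k j : ℕ} (hkj : k ≤ j) :
    ENNReal.ofReal (C₂ * ((2 : ℝ) ^ (-(j : ℤ))) ^ d) * volume K ≤
      ENNReal.ofReal ((2 * (2 : ℝ) ^ (-(j : ℤ))) ^ n) *
        ENNReal.ofReal (2 ^ ((n : ℝ) - d)) ^ (j - k) * μ k (cthickening ((2 : ℝ) ^ (-(j : ℤ))) K) := by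
  have := h.isLocallyFiniteMeasure j
  set t : ℝ := (2 : ℝ) ^ (-(j : ℤ))
  calc ENNReal.ofReal (C₂ * t ^ d) * volume K = ∫⁻ _ in K, ENNReal.ofReal (C₂ * t ^ d) :=
        (setLIntegral_const _ _).symm
    _ ≤ ∫⁻ y in K, μ j (closedBall y t) :=
        setLIntegral_mono' hK.measurableSet fun y hy => h.2.2.1 j y (hKS hy)
    _ ≤ ENNReal.ofReal ((2 * t) ^ n) * μ j (cthickening t K) :=
        setLIntegral_measure_closedBall_le hK.measurableSet fun z => by
          rw [Real.volume_pi_closedBall z (by positivity), Fintype.card_fin]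
    _ ≤ _ := by
        rw [mul_assoc]
        gcongr
        exact h.measure_le_pow_mul hS isClosed_cthickening.measurableSet hkj

lemma volume_le_of_isCompact (h : IsDRegularSystem n d S μ C₁ C₂) (hS : MeasurableSet S)
    (hC₂ : 0 < C₂) {K : Set (Fin n → ℝ)} (hK : IsCompact K) (hKS : K ⊆ S) (k : ℕ) :
    volume K ≤ ENNReal.ofReal (2 ^ n * ((2 : ℝ) ^ (-(k : ℤ))) ^ ((n : ℝ) - d) / C₂) * μ k K := by
  have := h.isLocallyFiniteMeasure k
  set c := ENNReal.ofReal (2 ^ n * ((2 : ℝ) ^ (-(k : ℤ))) ^ ((n : ℝ) - d) / C₂)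
  have hscale : ∀ j ≥ k, volume K ≤ c * μ k (cthickening ((2 : ℝ) ^ (-(j : ℤ))) K) := by
    intro j hkj
    have hpos : ENNReal.ofReal (C₂ * ((2 : ℝ) ^ (-(j : ℤ))) ^ d) ≠ 0 := by
      rw [ENNReal.ofReal_ne_zero_iff]; positivity
    rw [← ENNReal.mul_le_mul_iff_right hpos ENNReal.ofReal_ne_top]
    refine (h.ofReal_mul_volume_le hS hK hKS hkj).trans_eq ?_
    rw [← ENNReal.ofReal_pow (by positivity), ← ENNReal.ofReal_mul (by positivity),
      two_mul_zpow_pow_mul_rpow_pow d hkj, ← mul_assoc (ENNReal.ofReal (C₂ * _)),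
      ← ENNReal.ofReal_mul (by positivity)]
    congr 2
    field_simp
  have hlim : Tendsto (fun j : ℕ => c * μ k (cthickening ((2 : ℝ) ^ (-(j : ℤ))) K)) atTop
      (𝓝 (c * μ k K)) :=
    ENNReal.Tendsto.const_mul
      ((tendsto_measure_cthickening_of_isCompact hK).comp tendsto_two_zpow_neg_atTop_nhds_zero)
      (Or.inr ENNReal.ofReal_ne_top)
  exact ge_of_tendsto hlim (eventually_ge_atTop k |>.mono hscale)

lemma volume_le (h : IsDRegularSystem n d S μ C₁ C₂) (hS : MeasurableSet S) (hC₂ : 0 < C₂)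
    {G : Set (Fin n → ℝ)} (hG : MeasurableSet G) (hGS : G ⊆ S) (k : ℕ) :
    volume G ≤ ENNReal.ofReal (2 ^ n * ((2 : ℝ) ^ (-(k : ℤ))) ^ ((n : ℝ) - d) / C₂) * μ k G := by
  rw [hG.measure_eq_iSup_isCompact]
  refine iSup₂_le fun K hKG => iSup_le fun hK => ?_
  calc volume K ≤ _ := h.volume_le_of_isCompact hS hC₂ hK (hKG.trans hGS) k
    _ ≤ _ := by gcongr

end IsDRegularSystem

/-- Let `d ∈ [0,n]`, `S ⊆ ℝⁿ` closed with a `d`-regular system of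
measures `{μ_k}`, and for `r > 0` let `k(r)` be the unique integer with
`r ∈ [2^{-k(r)}, 2^{-k(r)+1})`.  Then there exists `C > 0` (depending only on `n, C₁, C₂`)
such that for every `x ∈ S`, `r ∈ (0,1)` and every Borel `G ⊆ Q(x,r) ∩ S`:
`L_n(G)/L_n(Q(x,r)) ≤ C μ_{k(r)}(G)/μ_{k(r)}(Q(x,r) ∩ S)`. -/
theorem statement14 (n : ℕ) (d : ℝ) (hd0 : 0 ≤ d) (hdn : d ≤ n)
    (S : Set (Fin n → ℝ)) (hS : IsClosed S)
    (μ : ℕ → Measure (Fin n → ℝ)) (C₁ C₂ : ℝ) (hC₁ : 0 < C₁) (hC₂ : 0 < C₂)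
    (hreg : IsDRegularSystem n d S μ C₁ C₂) :
    ∃ C : ℝ, 0 < C ∧ ∀ x ∈ S, ∀ r : ℝ, 0 < r → r < 1 →
      ∀ k : ℕ, (2:ℝ)^(-(k:ℤ)) ≤ r → r < (2:ℝ)^(-(k:ℤ)+1) →
        ∀ G : Set (Fin n → ℝ), MeasurableSet G → G ⊆ closedBall x r ∩ S →
          volume G / volume (closedBall x r)
            ≤ ENNReal.ofReal C * (μ k G / μ k (closedBall x r ∩ S)) := by
  refine ⟨2 ^ n * C₁ / C₂, by positivity, fun x _ r hr0 _ k hk1 hk2 G hG hGQ => ?_⟩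
  obtain ⟨m, rfl⟩ : ∃ m, k = m + 1 :=
    Nat.exists_eq_succ_of_ne_zero (by rintro rfl; norm_num at hk1; linarith)
  have hrm : r ≤ (2 : ℝ) ^ (-(m : ℤ)) := by
    rw [show -((m + 1 : ℕ) : ℤ) + 1 = -(m : ℤ) by push_cast; ring] at hk2
    exact hk2.le
  have hvol : volume (closedBall x r) = ENNReal.ofReal ((2 * r) ^ n) := by
    rw [Real.volume_pi_closedBall x hr0.le, Fintype.card_fin]
  refine ENNReal.div_le_mul_div_of_le
    (hreg.volume_le hS.measurableSet hC₂ hG (hGQ.trans inter_subset_right) (m + 1)) ?_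
    ((measure_mono inter_subset_left).trans
      (hreg.measure_succ_closedBall_le hS.measurableSet x hr0 hrm))
    (by rw [ENNReal.ofReal_ne_zero_iff]; positivity) ENNReal.ofReal_ne_top
    (by rw [hvol, ENNReal.ofReal_ne_zero_iff]; positivity)
    (by rw [hvol]; exact ENNReal.ofReal_ne_top)
  rw [hvol, ← ENNReal.ofReal_mul (by positivity), ← ENNReal.ofReal_mul (by positivity)]
  exact ENNReal.ofReal_le_ofReal (two_pow_mul_rpow_mul_le hd0 hdn hC₁.le hC₂ (by positivity) hk1)
end

section
/- Let d ∈ [0,n], S ⊂ ℝⁿ closed with a d-regular system of measures {μ_k}, and g ∈ L¹_loc(ℝⁿ, μ_k) for all k. Then there exists C > 0 such that for every c ≥ 1 and every pair of cubes Q = Q(x,r), Q' = Q(x',cr) with x ∈ S, cr ∈ (0,1), and Q ⊂ Q': the μ_{k(r)}-average of |g| over Q(x,r) is at most C times the μ_{k(r)}-average of |g| over Q(x',cr), where k(r) is the integer with r ∈ [2^{-k(r)}, 2^{-k(r)+1}) and C depends only on n, c, C₁, C₂. -/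
open Metric Set MeasureTheory
open scoped ENNReal NNReal

/-- Let `d ∈ [0,n]`, `S ⊆ ℝⁿ` closed with a `d`-regular system of
measures `{μ_k}`, and `g ∈ L¹_loc(ℝⁿ, μ_k)` for all `k`.  For every `c ≥ 1` there is a
constant `C > 0` (depending only on `n, c, C₁, C₂`) such that for every pair of cubes
`Q = Q(x,r) ⊆ Q' = Q(x',cr)` with `x ∈ S` and `cr ∈ (0,1)`, the `μ_{k(r)}`-average of
`|g|` over `Q` is at most `C` times the `μ_{k(r)}`-average of `|g|` over `Q'`; here
`k(r)` is the unique integer with `r ∈ [2^{-k(r)}, 2^{-k(r)+1})`. -/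
theorem statement15 (n : ℕ) (d : ℝ) (hd0 : 0 ≤ d) (hdn : d ≤ n)
    (S : Set (Fin n → ℝ)) (hS : IsClosed S)
    (μ : ℕ → Measure (Fin n → ℝ)) (C₁ C₂ : ℝ) (hC₁ : 0 < C₁) (hC₂ : 0 < C₂)
    (hreg : IsDRegularSystem n d S μ C₁ C₂)
    (g : (Fin n → ℝ) → ℝ) (hg : ∀ k, LocallyIntegrable g (μ k))
    (c : ℝ) (hc : 1 ≤ c) :
    ∃ C : ℝ, 0 < C ∧ ∀ x ∈ S, ∀ (x' : Fin n → ℝ) (r : ℝ), 0 < r → c * r < 1 →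
      closedBall x r ⊆ closedBall x' (c * r) →
      ∀ k : ℕ, (2:ℝ)^(-(k:ℤ)) ≤ r → r < (2:ℝ)^(-(k:ℤ)+1) →
        (∫⁻ y in closedBall x r, ENNReal.ofReal |g y| ∂(μ k)) / μ k (closedBall x r)
          ≤ ENNReal.ofReal C *
            ((∫⁻ y in closedBall x' (c * r), ENNReal.ofReal |g y| ∂(μ k)) /
              μ k (closedBall x' (c * r))) := by
    classical
  obtain ⟨hsupp, hup, hlow, hmono⟩ := hreg
  refine ⟨(4*c)^n * (2*c)^n * C₁ / C₂, by positivity, ?_⟩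
  intro x hx x' r hr hcr1 hQQ' k hk1 hk2
  have hc0 : (0:ℝ) < c := lt_of_lt_of_le one_pos hc
  have hcrpos : (0:ℝ) < c * r := mul_pos hc0 hr
  have hrcr : r ≤ c * r := le_mul_of_one_le_left hr.le hc
  set C : ℝ := (4*c)^n * (2*c)^n * C₁ / C₂ with hC_def
  have hCpos : 0 < C := by positivity
  -- choose j : largest index ≤ k with c*r ≤ 2^{-j}
  set P : ℕ → Prop := fun j => c * r ≤ (2:ℝ)^(-(j:ℤ)) with hP_def
  set j := Nat.findGreatest P k with hj_def
  have hP0 : P 0 := by simpa [hP_def] using hcr1.le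
  have hPj : c * r ≤ (2:ℝ)^(-(j:ℤ)) := Nat.findGreatest_spec (Nat.zero_le k) hP0
  have hjk : j ≤ k := Nat.findGreatest_le k
  have hj1 : (2:ℝ)^(-(j:ℤ)-1) < c * r := by
    rcases lt_or_eq_of_le hjk with h | h
    · have hnP : ¬ P (j+1) := Nat.findGreatest_is_greatest (Nat.lt_succ_self j) h
      have : (2:ℝ)^(-((j+1:ℕ):ℤ)) < c * r := lt_of_not_ge hnP
      calc (2:ℝ)^(-(j:ℤ)-1) = (2:ℝ)^(-((j+1:ℕ):ℤ)) := by push_cast; ring_nf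
        _ < c * r := this
    · have h1 : (2:ℝ)^(-(j:ℤ)-1) < (2:ℝ)^(-(j:ℤ)) := by
        apply zpow_lt_zpow_right₀ (by norm_num : (1:ℝ) < 2); omega
      calc (2:ℝ)^(-(j:ℤ)-1) < (2:ℝ)^(-(j:ℤ)) := h1
        _ = (2:ℝ)^(-(k:ℤ)) := by rw [h]
        _ ≤ r := hk1
        _ ≤ c * r := hrcr
  set i := k - j with hi_def
  have hki : k = j + i := by omega
  -- bound (2:ℝ)^i ≤ 4c
  have h2i : (2:ℝ)^(i:ℕ) ≤ 4 * c := by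
    have e1 : (2:ℝ)^(i:ℕ) = (2:ℝ)^((k:ℤ)-(j:ℤ)) := by
      rw [← zpow_natCast]; congr 1; omega
    have e2 : (2:ℝ)^((k:ℤ)-(j:ℤ)) = (2:ℝ)^((k:ℤ)+1) * (2:ℝ)^(-(j:ℤ)-1) := by
      rw [← zpow_add₀ (two_ne_zero)]; congr 1; ring
    have hk1pos : (0:ℝ) < (2:ℝ)^((k:ℤ)+1) := by positivity
    have e3 : (2:ℝ)^((k:ℤ)+1) * (2:ℝ)^(-(j:ℤ)-1) < (2:ℝ)^((k:ℤ)+1) * (c * r) :=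
      mul_lt_mul_of_pos_left hj1 hk1pos
    have e4 : (2:ℝ)^((k:ℤ)+1) * (c * r) < (2:ℝ)^((k:ℤ)+1) * (c * (2:ℝ)^(-(k:ℤ)+1)) := by
      apply mul_lt_mul_of_pos_left _ hk1pos
      exact mul_lt_mul_of_pos_left hk2 hc0
    have e5 : (2:ℝ)^((k:ℤ)+1) * (c * (2:ℝ)^(-(k:ℤ)+1)) = 4 * c := by
      have : (2:ℝ)^((k:ℤ)+1) * (2:ℝ)^(-(k:ℤ)+1) = 4 := by
        rw [← zpow_add₀ (two_ne_zero)]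
        have he : ((k:ℤ)+1+(-(k:ℤ)+1)) = 2 := by ring
        rw [he]; norm_num
      calc (2:ℝ)^((k:ℤ)+1) * (c * (2:ℝ)^(-(k:ℤ)+1))
          = ((2:ℝ)^((k:ℤ)+1) * (2:ℝ)^(-(k:ℤ)+1)) * c := by ring
        _ = 4 * c := by rw [this]
    linarith [e1 ▸ (e2 ▸ (lt_trans e3 e4)), e5]
  -- the set G
  set G : Set (Fin n → ℝ) := closedBall x' (c*r) ∩ S with hG_def
  have hGS : G ⊆ S := inter_subset_right
  have hGmeas : MeasurableSet G := measurableSet_closedBall.inter hS.measurableSet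
  -- one step of the comparison
  have key1 : ENNReal.ofReal ((2:ℝ)^((n:ℝ)-d)) * ENNReal.ofReal ((2:ℝ)^(d-(n:ℝ))) = 1 := by
    rw [← ENNReal.ofReal_mul (by positivity), ← Real.rpow_add two_pos]
    norm_num
  have hstep : ∀ m : ℕ, μ (m+1) G ≤ ENNReal.ofReal ((2:ℝ)^((n:ℝ)-d)) * μ m G := by
    intro m
    have h := (hmono m G hGS hGmeas).1
    calc μ (m+1) G = 1 * μ (m+1) G := (one_mul _).symm
      _ = ENNReal.ofReal ((2:ℝ)^((n:ℝ)-d)) * (ENNReal.ofReal ((2:ℝ)^(d-(n:ℝ))) * μ (m+1) G) := by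
          rw [← mul_assoc, key1]
      _ ≤ ENNReal.ofReal ((2:ℝ)^((n:ℝ)-d)) * μ m G := mul_le_mul_right h _
  have hiter : ∀ m : ℕ, μ (j+m) G ≤ ENNReal.ofReal ((2:ℝ)^((n:ℝ)-d)) ^ m * μ j G := by
    intro m
    induction m with
    | zero => simp
    | succ m ih =>
        calc μ (j+(m+1)) G = μ ((j+m)+1) G := by rw [Nat.add_assoc]
          _ ≤ ENNReal.ofReal ((2:ℝ)^((n:ℝ)-d)) * μ (j+m) G := hstep _
          _ ≤ ENNReal.ofReal ((2:ℝ)^((n:ℝ)-d)) * (ENNReal.ofReal ((2:ℝ)^((n:ℝ)-d)) ^ m * μ j G) :=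
              mul_le_mul_right ih _
          _ = ENNReal.ofReal ((2:ℝ)^((n:ℝ)-d)) ^ (m+1) * μ j G := by ring
  -- real bound: (2^{n-d})^i ≤ (4c)^n
  have hpow : ((2:ℝ)^((n:ℝ)-d)) ^ i ≤ (4*c)^n := by
    have h4c1 : (1:ℝ) ≤ 4*c := by linarith
    have e1 : ((2:ℝ)^((n:ℝ)-d)) ^ i = (2:ℝ)^(((n:ℝ)-d)*(i:ℕ)) := by
      rw [← Real.rpow_natCast ((2:ℝ)^((n:ℝ)-d)) i, ← Real.rpow_mul (by norm_num)]
    have e2 : (2:ℝ)^(((n:ℝ)-d)*(i:ℕ)) = ((2:ℝ)^(i:ℕ)) ^ ((n:ℝ)-d) := by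
      rw [← Real.rpow_natCast (2:ℝ) i, ← Real.rpow_mul (by norm_num)]
      ring_nf
    have e3 : ((2:ℝ)^(i:ℕ)) ^ ((n:ℝ)-d) ≤ (4*c) ^ ((n:ℝ)-d) :=
      Real.rpow_le_rpow (by positivity) h2i (by linarith)
    have e4 : (4*c) ^ ((n:ℝ)-d) ≤ (4*c) ^ ((n:ℝ)) :=
      Real.rpow_le_rpow_of_exponent_le h4c1 (by linarith)
    have e5 : (4*c) ^ ((n:ℝ)) = (4*c)^n := Real.rpow_natCast _ n
    calc ((2:ℝ)^((n:ℝ)-d)) ^ i = ((2:ℝ)^(i:ℕ)) ^ ((n:ℝ)-d) := by rw [e1, e2]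
      _ ≤ (4*c) ^ ((n:ℝ)-d) := e3
      _ ≤ (4*c)^n := by rw [← e5] at *; exact e4
  -- upper bound on μ k (Q')
  have hQ'top : μ k (closedBall x' (c*r)) ≤ ENNReal.ofReal ((4*c)^n * (C₁ * (c*r)^d)) := by
    have hsub : closedBall x' (c*r) ⊆ G ∪ Sᶜ := by
      intro y hy
      by_cases h : y ∈ S
      · exact Or.inl ⟨hy, h⟩
      · exact Or.inr h
    have h0 : μ k (closedBall x' (c*r)) ≤ μ k G := by
      calc μ k (closedBall x' (c*r)) ≤ μ k (G ∪ Sᶜ) := measure_mono hsub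
        _ ≤ μ k G + μ k Sᶜ := measure_union_le _ _
        _ = μ k G := by rw [hsupp, add_zero]
    have h1 : μ j G ≤ ENNReal.ofReal (C₁ * (c*r)^d) := by
      calc μ j G ≤ μ j (closedBall x' (c*r)) := measure_mono inter_subset_left
        _ ≤ ENNReal.ofReal (C₁ * (c*r)^d) := hup j x' (c*r) hcrpos hPj
    calc μ k (closedBall x' (c*r)) ≤ μ k G := h0
      _ = μ (j+i) G := by rw [← hki]
      _ ≤ ENNReal.ofReal ((2:ℝ)^((n:ℝ)-d)) ^ i * μ j G := hiter i
      _ ≤ ENNReal.ofReal (((2:ℝ)^((n:ℝ)-d)) ^ i) * ENNReal.ofReal (C₁ * (c*r)^d) := by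
          rw [ENNReal.ofReal_pow (by positivity)]
          exact mul_le_mul_right h1 _
      _ ≤ ENNReal.ofReal ((4*c)^n) * ENNReal.ofReal (C₁ * (c*r)^d) :=
          mul_le_mul_left (ENNReal.ofReal_le_ofReal hpow) _
      _ = ENNReal.ofReal ((4*c)^n * (C₁ * (c*r)^d)) := by
          rw [← ENNReal.ofReal_mul (by positivity)]
  -- lower bound on μ k (Q)
  have hr2 : r/2 ≤ (2:ℝ)^(-(k:ℤ)) := by
    have : (2:ℝ)^(-(k:ℤ)+1) = 2 * (2:ℝ)^(-(k:ℤ)) := by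
      rw [zpow_add₀ (two_ne_zero), zpow_one]; ring
    rw [this] at hk2
    linarith
  have hmL : ENNReal.ofReal (C₂ * (r/2)^d) ≤ μ k (closedBall x r) := by
    calc ENNReal.ofReal (C₂ * (r/2)^d) ≤ ENNReal.ofReal (C₂ * ((2:ℝ)^(-(k:ℤ)))^d) := by
          apply ENNReal.ofReal_le_ofReal
          exact mul_le_mul_of_nonneg_left (Real.rpow_le_rpow (by positivity) hr2 hd0) hC₂.le
      _ ≤ μ k (closedBall x ((2:ℝ)^(-(k:ℤ)))) := hlow k x hx
      _ ≤ μ k (closedBall x r) := measure_mono (closedBall_subset_closedBall hk1)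
  -- combine to m' ≤ ofReal C * m
  have hreal : (4*c)^n * (C₁ * (c*r)^d) ≤ C * (C₂ * (r/2)^d) := by
    have hsplit : (c*r)^d = (2*c)^d * (r/2)^d := by
      rw [← Real.mul_rpow (by positivity) (by positivity)]
      congr 1; ring
    have h2cd : (2*c)^d ≤ (2*c)^n := by
      have := Real.rpow_le_rpow_of_exponent_le (by linarith : (1:ℝ) ≤ 2*c) hdn
      rwa [Real.rpow_natCast] at this
    have hCC₂ : C * C₂ = (4*c)^n * (2*c)^n * C₁ := by
      rw [hC_def]; field_simp
    calc (4*c)^n * (C₁ * (c*r)^d) = ((4*c)^n * C₁ * (r/2)^d) * (2*c)^d := by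
          rw [hsplit]; ring
      _ ≤ ((4*c)^n * C₁ * (r/2)^d) * (2*c)^n := by
          apply mul_le_mul_of_nonneg_left h2cd (by positivity)
      _ = C * (C₂ * (r/2)^d) := by
          have : C * (C₂ * (r/2)^d) = (C * C₂) * (r/2)^d := by ring
          rw [this, hCC₂]; ring
  have hm'm : μ k (closedBall x' (c*r)) ≤ ENNReal.ofReal C * μ k (closedBall x r) := by
    calc μ k (closedBall x' (c*r)) ≤ ENNReal.ofReal ((4*c)^n * (C₁ * (c*r)^d)) := hQ'top
      _ ≤ ENNReal.ofReal (C * (C₂ * (r/2)^d)) := ENNReal.ofReal_le_ofReal hreal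
      _ = ENNReal.ofReal C * ENNReal.ofReal (C₂ * (r/2)^d) := ENNReal.ofReal_mul hCpos.le
      _ ≤ ENNReal.ofReal C * μ k (closedBall x r) := mul_le_mul_right hmL _
  -- basic facts about the measures
  set m := μ k (closedBall x r) with hm_def
  set m' := μ k (closedBall x' (c*r)) with hm'_def
  have hm0 : m ≠ 0 := by
    intro h
    have := hmL
    rw [h, le_zero_iff, ENNReal.ofReal_eq_zero] at this
    have : (0:ℝ) < C₂ * (r/2)^d := by positivity
    linarith
  have hmm' : m ≤ m' := measure_mono hQQ'
  have hm'top : m' ≠ ⊤ := by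
    intro h
    rw [h] at hQ'top
    exact (ENNReal.ofReal_lt_top.ne (top_le_iff.mp hQ'top)).elim
  have hmtop : m ≠ ⊤ := fun h => hm'top (top_le_iff.mp (h ▸ hmm'))
  have hm'0 : m' ≠ 0 := fun h => hm0 (le_zero_iff.mp (h ▸ hmm'))
  -- final computation
  rw [ENNReal.div_le_iff hm0 hmtop]
  set A := ∫⁻ y in closedBall x r, ENNReal.ofReal |g y| ∂(μ k) with hA_def
  set A' := ∫⁻ y in closedBall x' (c*r), ENNReal.ofReal |g y| ∂(μ k) with hA'_def
  have hAA' : A ≤ A' := lintegral_mono_set hQQ'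
  calc A ≤ A' := hAA'
    _ = A' / m' * m' := (ENNReal.div_mul_cancel hm'0 hm'top).symm
    _ ≤ A' / m' * (ENNReal.ofReal C * m) := mul_le_mul_right hm'm _
    _ = ENNReal.ofReal C * (A' / m') * m := by ring
end

section
/- Let S ⊂ ℝⁿ be closed and nonempty, {Q_κ} a Whitney decomposition of ℝⁿ \ S, λ ∈ (0,1), and k ∈ ℕ₀. If x ∈ S_k(λ) (i.e., there exists y ∈ Q(x, 2^{-k}) with Q(y, λ2^{-k}) ⊂ ℝⁿ \ S), then there exists y(x) ∈ Q(x, 2^{-k}) such that every Whitney cube Q_κ containing y(x) satisfies λ2^{-k}/5 ≤ diam Q_κ ≤ 2^{-k}. -/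
open Metric Set MeasureTheory
open scoped ENNReal NNReal

/-- Let `S ⊆ ℝⁿ` be closed nonempty, `{Q_κ}` a Whitney decomposition of
`ℝⁿ \ S` (closed cubes with disjoint interiors whose union is `ℝⁿ \ S`, with
`diam Q_κ ≤ dist(Q_κ, S) ≤ 4 diam Q_κ`), `λ ∈ (0,1)` and `k ∈ ℕ₀`.  If `x ∈ S_k(λ)`
(i.e. there is `y ∈ Q(x, 2^{-k})` with `Q(y, λ 2^{-k}) ⊆ ℝⁿ \ S`), then there exists
`y(x) ∈ Q(x, 2^{-k})` such that every Whitney cube containing `y(x)` satisfies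
`λ 2^{-k}/5 ≤ diam Q_κ ≤ 2^{-k}`.  Distances and cubes are in the sup norm. -/
theorem statement16 (n : ℕ) (S : Set (Fin n → ℝ)) (hS : IsClosed S) (hne : S.Nonempty)
    (ι : Type*) (x : ι → (Fin n → ℝ)) (r : ι → ℝ) (hr : ∀ κ, 0 < r κ)
    (hcover : (⋃ κ, closedBall (x κ) (r κ)) = Sᶜ)
    (hdisj : Pairwise fun κ κ' => Disjoint (ball (x κ) (r κ)) (ball (x κ') (r κ')))
    (hlow : ∀ κ, ∀ a ∈ closedBall (x κ) (r κ), 2 * r κ ≤ Metric.infDist a S)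
    (hupp : ∀ κ, ∃ a ∈ closedBall (x κ) (r κ), Metric.infDist a S ≤ 8 * r κ)
    (lam : ℝ) (hlam : lam ∈ Set.Ioo (0:ℝ) 1) (k : ℕ)
    (x₀ : Fin n → ℝ) (hx₀S : x₀ ∈ S)
    (hx₀ : ∃ y ∈ closedBall x₀ ((2:ℝ)^(-(k:ℤ))),
      closedBall y (lam * (2:ℝ)^(-(k:ℤ))) ⊆ Sᶜ) :
    ∃ y ∈ closedBall x₀ ((2:ℝ)^(-(k:ℤ))),
      ∀ κ, y ∈ closedBall (x κ) (r κ) →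
        lam * (2:ℝ)^(-(k:ℤ)) / 5 ≤ 2 * r κ ∧ 2 * r κ ≤ (2:ℝ)^(-(k:ℤ)) := by
  obtain ⟨y, hy, hball⟩ := hx₀
  refine ⟨y, hy, fun κ hκ => ?_⟩
  have hlb : lam * (2:ℝ)^(-(k:ℤ)) ≤ Metric.infDist y S := by
    by_contra h
    push_neg at h
    obtain ⟨z, hzS, hz⟩ := (Metric.infDist_lt_iff hne).mp h
    exact (hball (Metric.mem_closedBall'.mpr hz.le)) hzS
  have hub : Metric.infDist y S ≤ (2:ℝ)^(-(k:ℤ)) :=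
    (Metric.infDist_le_dist_of_mem hx₀S).trans (Metric.mem_closedBall.mp hy)
  constructor
  · obtain ⟨a, ha, hainf⟩ := hupp κ
    have hya : dist y a ≤ 2 * r κ := by
      calc dist y a ≤ dist y (x κ) + dist (x κ) a := dist_triangle _ _ _
        _ ≤ r κ + r κ := add_le_add (Metric.mem_closedBall.mp hκ)
            (dist_comm (x κ) a ▸ (Metric.mem_closedBall.mp ha))
        _ = 2 * r κ := by ring
    have : Metric.infDist y S ≤ 10 * r κ := by
      calc Metric.infDist y S ≤ Metric.infDist a S + dist y a :=
            Metric.infDist_le_infDist_add_dist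
        _ ≤ 8 * r κ + 2 * r κ := add_le_add hainf hya
        _ = 10 * r κ := by ring
    linarith
  · exact (hlow κ y hκ).trans hub
end

section
/- Let β: [0,∞) → [0,∞) be continuous and strictly increasing with β(0) = 0 and β(t) > 0 for t > 0. Let G^β = {(x', x_n) ∈ ℝ^{n-1} × ℝ : x_n ≥ 0, ‖x'‖_∞ ≤ β(x_n)} be the closed single cusp. Then the boundary ∂G^β is porous: there exists λ ∈ (0,1) such that for every j ∈ ℕ₀ and every x ∈ ∂G^β there exists y ∈ Q(x, 2^{-j}) with Q(y, λ2^{-j}) ∩ ∂G^β = ∅. -/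
open Metric Set MeasureTheory
open scoped ENNReal NNReal

lemma cusp_mem_interior (m : ℕ) (β : ℝ → ℝ) (hβc : ContinuousOn β (Set.Ici 0))
    (q : (Fin m → ℝ) × ℝ) (hq2 : 0 < q.2) (hq1 : ‖q.1‖ < β q.2) :
    q ∈ interior {p : (Fin m → ℝ) × ℝ | 0 ≤ p.2 ∧ ‖p.1‖ ≤ β p.2} := by
  rw [mem_interior_iff_mem_nhds, Metric.mem_nhds_iff]
  set ε := (β q.2 - ‖q.1‖) / 2 with hεdef
  have hεpos : 0 < ε := by rw [hεdef]; linarith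
  have hc : ContinuousWithinAt β (Set.Ici 0) q.2 := hβc q.2 hq2.le
  rw [Metric.continuousWithinAt_iff] at hc
  obtain ⟨δ, hδpos, hδ⟩ := hc ε hεpos
  refine ⟨min δ (min q.2 ε), by positivity, ?_⟩
  intro p hp
  rw [Metric.mem_ball, Prod.dist_eq, max_lt_iff] at hp
  obtain ⟨hp1, hp2⟩ := hp
  have hd2 : |p.2 - q.2| < min δ (min q.2 ε) := by rwa [Real.dist_eq] at hp2
  obtain ⟨hd2a, hd2b⟩ := abs_lt.mp hd2
  have hmin1 : min δ (min q.2 ε) ≤ δ := min_le_left _ _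
  have hmin2 : min δ (min q.2 ε) ≤ q.2 := le_trans (min_le_right _ _) (min_le_left _ _)
  have hmin3 : min δ (min q.2 ε) ≤ ε := le_trans (min_le_right _ _) (min_le_right _ _)
  have hp2pos : 0 < p.2 := by linarith
  have hβp : |β p.2 - β q.2| < ε := by
    apply hδ (Set.mem_Ici.mpr hp2pos.le)
    rw [Real.dist_eq]; linarith
  obtain ⟨hβa, hβb⟩ := abs_lt.mp hβp
  have hd1 : ‖p.1 - q.1‖ < ε := by
    rw [dist_eq_norm] at hp1; linarith
  have hnp : ‖p.1‖ ≤ ‖q.1‖ + ‖p.1 - q.1‖ := by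
    calc ‖p.1‖ = ‖q.1 + (p.1 - q.1)‖ := by ring_nf
      _ ≤ ‖q.1‖ + ‖p.1 - q.1‖ := norm_add_le _ _
  refine ⟨hp2pos.le, ?_⟩
  rw [hεdef] at hβa hd1
  linarith

/-- Let `β : [0,∞) → [0,∞)` be continuous and strictly increasing with
`β(0) = 0` and `β(t) > 0` for `t > 0`, and let
`G^β = {(x', x_n) ∈ ℝ^{n-1} × ℝ : x_n ≥ 0, ‖x'‖_∞ ≤ β(x_n)}` be the closed single cusp.
Then `∂G^β` is porous: there is `λ ∈ (0,1)` such that for every `j ∈ ℕ₀` and every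
`x ∈ ∂G^β` there exists `y ∈ Q(x, 2^{-j})` with `Q(y, λ 2^{-j}) ∩ ∂G^β = ∅`.
Here `ℝ^{n-1} × ℝ` is modelled as `(Fin m → ℝ) × ℝ` (with `m = n-1`) carrying the sup
norm, so that closed balls are cubes. -/
theorem statement18 (m : ℕ) (β : ℝ → ℝ)
    (hβc : ContinuousOn β (Set.Ici 0)) (hβmono : StrictMonoOn β (Set.Ici 0))
    (hβ0 : β 0 = 0) (hβpos : ∀ t : ℝ, 0 < t → 0 < β t) :
    ∃ lam : ℝ, 0 < lam ∧ lam < 1 ∧ ∀ j : ℕ,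
      ∀ x ∈ frontier {p : (Fin m → ℝ) × ℝ | 0 ≤ p.2 ∧ ‖p.1‖ ≤ β p.2},
        ∃ y ∈ closedBall x ((2:ℝ)^(-(j:ℤ))),
          closedBall y (lam * (2:ℝ)^(-(j:ℤ))) ∩
            frontier {p : (Fin m → ℝ) × ℝ | 0 ≤ p.2 ∧ ‖p.1‖ ≤ β p.2} = ∅ := by
  classical
  set G := {p : (Fin m → ℝ) × ℝ | 0 ≤ p.2 ∧ ‖p.1‖ ≤ β p.2} with hGdef
  have hmono : MonotoneOn β (Set.Ici 0) := hβmono.monotoneOn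
  have hcont : Continuous fun t : ℝ => β (max t 0) := by
    apply hβc.comp_continuous (continuous_id.max continuous_const)
    intro t; exact Set.mem_Ici.mpr (le_max_right t 0)
  have hclosed : IsClosed G := by
    have hGeq : G = {p : (Fin m → ℝ) × ℝ | 0 ≤ p.2} ∩
        {p : (Fin m → ℝ) × ℝ | ‖p.1‖ ≤ β (max p.2 0)} := by
      ext p
      simp only [hGdef, Set.mem_inter_iff, Set.mem_setOf_eq]
      constructor
      · rintro ⟨h1, h2⟩; exact ⟨h1, by rwa [max_eq_left h1]⟩
      · rintro ⟨h1, h2⟩; exact ⟨h1, by rwa [max_eq_left h1] at h2⟩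
    rw [hGeq]
    exact (isClosed_le continuous_const continuous_snd).inter
      (isClosed_le continuous_fst.norm (hcont.comp continuous_snd))
  refine ⟨1/4, by norm_num, by norm_num, ?_⟩
  intro j x hx
  set r : ℝ := (2:ℝ)^(-(j:ℤ)) with hrdef
  have hr : 0 < r := by positivity
  have hxG : x ∈ G := hclosed.frontier_subset hx
  obtain ⟨hx2, hx1⟩ := hxG
  have hxnotint : x ∉ interior G := by
    rw [hclosed.frontier_eq] at hx; exact hx.2
  have heq : ‖x.1‖ = β x.2 := by
    rcases eq_or_lt_of_le hx1 with h | h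
    · exact h
    · exfalso
      have h2pos : 0 < x.2 := by
        rcases eq_or_lt_of_le hx2 with h0 | h0
        · exfalso; rw [← h0, hβ0] at h; exact absurd h (not_lt.mpr (norm_nonneg _))
        · exact h0
      exact hxnotint (cusp_mem_interior m β hβc x h2pos h)
  rcases Nat.eq_zero_or_pos m with hm | hm
  · -- m = 0 : every frontier point has x.2 = 0; move down
    subst hm
    have hx10 : ‖x.1‖ = 0 := by
      have : x.1 = 0 := funext fun i => i.elim0
      simp [this]
    have hx20 : x.2 = 0 := by
      apply hβmono.injOn (Set.mem_Ici.mpr hx2) (Set.mem_Ici.mpr le_rfl)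
      rw [hβ0, ← heq, hx10]
    refine ⟨(x.1, x.2 - r), ?_, ?_⟩
    · rw [Metric.mem_closedBall, Prod.dist_eq]
      apply max_le
      · simp [hr.le]
      · rw [Real.dist_eq]
        have h9 : x.2 - r - x.2 = -r := by ring
        rw [h9, abs_neg, abs_of_nonneg hr.le]
    · rw [Set.eq_empty_iff_forall_notMem]
      rintro q ⟨hq1, hq2⟩
      have hqG : q ∈ G := hclosed.frontier_subset hq2
      rw [Metric.mem_closedBall, Prod.dist_eq, max_le_iff] at hq1
      have h2 := hq1.2
      rw [Real.dist_eq] at h2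
      obtain ⟨ha, hb⟩ := abs_le.mp h2
      have hq2nn : 0 ≤ q.2 := hqG.1
      simp only at ha hb
      linarith
  · -- m ≥ 1
    have hi0 : (⟨0, hm⟩ : Fin m) ∈ Finset.univ := Finset.mem_univ _
    obtain ⟨i, -, hi⟩ := Finset.exists_max_image Finset.univ (fun k => |x.1 k|) ⟨⟨0, hm⟩, hi0⟩
    have hnorm_i : ‖x.1‖ = |x.1 i| := by
      apply le_antisymm
      · apply (pi_norm_le_iff_of_nonneg (abs_nonneg _)).mpr
        intro k; rw [Real.norm_eq_abs]; exact hi k (Finset.mem_univ k)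
      · rw [← Real.norm_eq_abs]; exact norm_le_pi_norm x.1 i
    by_cases hsteep : β (x.2 + 1/4 * r) - β x.2 < 3/4 * r
    · -- flat case: move sideways
      set s : ℝ := if 0 ≤ x.1 i then r else -r with hsdef
      set y : (Fin m → ℝ) × ℝ := (x.1 + Pi.single i s, x.2) with hydef
      have habs : |x.1 i + s| = |x.1 i| + r := by
        rw [hsdef]; split_ifs with h
        · rw [abs_of_nonneg h, abs_of_nonneg (by linarith)]
        · push_neg at h
          rw [abs_of_neg h, abs_of_neg (by linarith)]; ring
      have hy1i : y.1 i = x.1 i + s := by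
        simp [hydef, Pi.single_eq_same]
      refine ⟨y, ?_, ?_⟩
      · rw [Metric.mem_closedBall, Prod.dist_eq]
        apply max_le
        · rw [dist_eq_norm]
          have : y.1 - x.1 = Pi.single i s := by
            rw [hydef]; simp
          rw [this, Pi.norm_single, Real.norm_eq_abs, hsdef]
          split_ifs <;> simp [abs_of_nonneg hr.le, abs_of_nonpos (neg_nonpos.mpr hr.le)]
        · simp [hydef, hr.le]
      · rw [Set.eq_empty_iff_forall_notMem]
        rintro q ⟨hq1, hq2⟩
        have hqG : q ∈ G := hclosed.frontier_subset hq2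
        rw [Metric.mem_closedBall, Prod.dist_eq, max_le_iff] at hq1
        obtain ⟨hq1a, hq1b⟩ := hq1
        have hqi : |q.1 i - (x.1 i + s)| ≤ 1/4 * r := by
          have h1 : ‖(q.1 - y.1) i‖ ≤ ‖q.1 - y.1‖ := norm_le_pi_norm _ i
          rw [dist_eq_norm] at hq1a
          rw [Pi.sub_apply, Real.norm_eq_abs, hy1i] at h1
          linarith
        have hqi2 : |x.1 i + s| - |q.1 i - (x.1 i + s)| ≤ |q.1 i| := by
          have := abs_sub_abs_le_abs_sub (x.1 i + s) (q.1 i)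
          have h2 : |x.1 i + s - q.1 i| = |q.1 i - (x.1 i + s)| := abs_sub_comm _ _
          linarith
        have hqnorm : |q.1 i| ≤ ‖q.1‖ := by
          rw [← Real.norm_eq_abs]; exact norm_le_pi_norm q.1 i
        have hq2le : q.2 ≤ x.2 + 1/4 * r := by
          rw [Real.dist_eq] at hq1b
          have := (abs_le.mp hq1b).2
          simp only [hydef] at this
          linarith
        have hβq : β q.2 ≤ β (x.2 + 1/4 * r) :=
          hmono (Set.mem_Ici.mpr hqG.1) (Set.mem_Ici.mpr (by linarith)) hq2le
        have hchain : β x.2 + 3/4 * r ≤ β q.2 := by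
          have := hqG.2
          rw [← hnorm_i] at habs
          rw [heq] at habs
          linarith
        linarith
    · -- steep case: move up; small ball is in the interior
      push_neg at hsteep
      set y : (Fin m → ℝ) × ℝ := (x.1, x.2 + r) with hydef
      refine ⟨y, ?_, ?_⟩
      · rw [Metric.mem_closedBall, Prod.dist_eq]
        apply max_le
        · simp [hydef, hr.le]
        · rw [Real.dist_eq]
          have h9 : x.2 + r - x.2 = r := by ring
          simp only [hydef]
          rw [h9, abs_of_nonneg hr.le]
      · rw [Set.eq_empty_iff_forall_notMem]
        rintro q ⟨hq1, hq2⟩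
        rw [Metric.mem_closedBall, Prod.dist_eq, max_le_iff] at hq1
        obtain ⟨hq1a, hq1b⟩ := hq1
        rw [Real.dist_eq] at hq1b
        obtain ⟨hba, hbb⟩ := abs_le.mp hq1b
        simp only [hydef] at hba hbb
        have hq2ge : x.2 + 3/4 * r ≤ q.2 := by linarith
        have hq2pos : 0 < q.2 := by linarith
        have hqn : ‖q.1‖ ≤ β x.2 + 1/4 * r := by
          have h1 : ‖q.1‖ ≤ ‖x.1‖ + ‖q.1 - x.1‖ := by
            calc ‖q.1‖ = ‖x.1 + (q.1 - x.1)‖ := by ring_nf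
              _ ≤ ‖x.1‖ + ‖q.1 - x.1‖ := norm_add_le _ _
          rw [dist_eq_norm] at hq1a
          simp only [hydef] at hq1a
          rw [heq] at h1
          linarith
        have hβq : β (x.2 + 1/4 * r) ≤ β q.2 :=
          hmono (Set.mem_Ici.mpr (by linarith)) (Set.mem_Ici.mpr hq2pos.le) (by linarith)
        have hqlt : ‖q.1‖ < β q.2 := by linarith
        have : q ∈ interior G := cusp_mem_interior m β hβc q hq2pos hqlt
        rw [hclosed.frontier_eq] at hq2
        exact hq2.2 this
end

section
/- Let m be a finite Borel measure on ℝⁿ supported in a closed nonempty set S, let {Q_κ}_{κ∈I} be a Whitney decomposition of ℝⁿ \ S with metric projections x̃_κ, and let 𝓘 = {κ ∈ I : r_κ ≤ 1}. Then for every c ≥ 1, Σ_{κ∈𝓘} L_n(Q(x̃_κ, r_κ)) · m(Q(x̃_κ, c)) ≤ C(c,n) · m(S), where the constant C depends only on c and n. -/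
open Function Metric Set MeasureTheory Measure

/-!
Write `m(Q(x̃_κ, c)) = ∫ 1_{Q(x̃_κ, c)} dm` and exchange sum and integral. At any point `y`, the
cubes `Q_κ` with `y ∈ Q(x̃_κ, c)` and `r_κ ≤ 1` have disjoint interiors and lie in `Q(y, c + 10)`,
because the Whitney condition puts `x̃_κ` within `9 r_κ` of the centre `x_κ`. Since
`L_n(Q(x̃_κ, r_κ)) = L_n(Q_κ)`, the integrand is at most `L_n(Q(y, c + 10)) = (2 (c + 10))ⁿ`,
and `m(ℝⁿ) = m(S)`.
-/

theorem dist_le_infDist_add_of_eq_infDist {α : Type*} [PseudoMetricSpace α] {S : Set α}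
    {x x' a : α} {r : ℝ} (hx' : dist x x' = infDist x S) (ha : a ∈ closedBall x r) :
    dist x x' ≤ infDist a S + r := by
  rw [hx']
  calc infDist x S ≤ infDist a S + dist x a := infDist_le_infDist_add_dist
    _ ≤ infDist a S + r := by linarith [mem_closedBall.mp ha, dist_comm x a]

theorem ball_subset_closedBall_of_dist_add_le {α : Type*} [PseudoMetricSpace α] {x x' y : α}
    {r c R : ℝ} (hR : dist x x' + r ≤ R) (hy : dist y x' ≤ c) :
    ball x r ⊆ closedBall y (c + R) := by
  intro z hz
  rw [mem_ball] at hz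
  rw [mem_closedBall]
  linarith [dist_triangle4 z x x' y, dist_comm y x']

theorem tsum_indicator_measure_ball_le {α ι : Type*} [PseudoMetricSpace α] [MeasurableSpace α]
    [OpensMeasurableSpace α] (μ : Measure α) {x x' : ι → α} {r : ι → ℝ} {c R : ℝ}
    (hdisj : Pairwise (Disjoint on fun i => ball (x i) (r i)))
    (hR : ∀ i, dist (x i) (x' i) + r i ≤ R) (y : α) :
    ∑' i, (closedBall (x' i) c).indicator (fun _ => μ (ball (x i) (r i))) y
      ≤ μ (closedBall y (c + R)) := by
  set J : Set ι := {i | y ∈ closedBall (x' i) c}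
  have hind : ∀ i, (closedBall (x' i) c).indicator (fun _ => μ (ball (x i) (r i))) y
      = J.indicator (fun i => μ (ball (x i) (r i))) i := fun i => by
    simp only [J, indicator, mem_ofPred_eq]
  calc ∑' i, (closedBall (x' i) c).indicator (fun _ => μ (ball (x i) (r i))) y
      = ∑' i : J, μ (ball (x i) (r i)) := by rw [tsum_congr hind, ← tsum_subtype]
    _ ≤ μ (⋃ i : J, ball (x i) (r i)) :=
      tsum_meas_le_meas_iUnion_of_disjoint μ (fun _ => measurableSet_ball)
        (hdisj.comp_of_injective Subtype.val_injective)
    _ ≤ μ (closedBall y (c + R)) :=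
      measure_mono <| iUnion_subset fun i =>
        ball_subset_closedBall_of_dist_add_le (hR i) (mem_closedBall.mp i.2)

section AddHaar

variable {E : Type*} [NormedAddCommGroup E] [NormedSpace ℝ E] [MeasurableSpace E] [BorelSpace E]
  [FiniteDimensional ℝ E] (μ : Measure E) [μ.IsAddHaarMeasure]

theorem addHaar_closedBall_eq_addHaar_ball_of_pos (x y : E) {r : ℝ} (hr : 0 < r) :
    μ (closedBall x r) = μ (ball y r) := by
  rw [addHaar_closedBall μ x hr.le, addHaar_ball_of_pos μ y hr]

theorem tsum_addHaar_closedBall_mul_le {ι : Type*} [Countable ι] (ν : Measure E)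
    {x x' : ι → E} {r : ι → ℝ} {c R : ℝ} (hr : ∀ i, 0 < r i)
    (hdisj : Pairwise (Disjoint on fun i => ball (x i) (r i)))
    (hR : ∀ i, dist (x i) (x' i) + r i ≤ R) :
    ∑' i, μ (closedBall (x' i) (r i)) * ν (closedBall (x' i) c)
      ≤ μ (closedBall 0 (c + R)) * ν univ := by
  have hterm : ∀ i, μ (closedBall (x' i) (r i)) * ν (closedBall (x' i) c)
      = ∫⁻ y, (closedBall (x' i) c).indicator (fun _ => μ (ball (x i) (r i))) y ∂ν := fun i => by
    rw [lintegral_indicator_const measurableSet_closedBall,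
      addHaar_closedBall_eq_addHaar_ball_of_pos μ _ _ (hr i)]
  calc ∑' i, μ (closedBall (x' i) (r i)) * ν (closedBall (x' i) c)
      = ∫⁻ y, ∑' i, (closedBall (x' i) c).indicator (fun _ => μ (ball (x i) (r i))) y ∂ν := by
        rw [tsum_congr hterm, lintegral_tsum fun i =>
          (measurable_const.indicator measurableSet_closedBall).aemeasurable]
    _ ≤ ∫⁻ _, μ (closedBall 0 (c + R)) ∂ν := lintegral_mono fun y =>
        (tsum_indicator_measure_ball_le μ hdisj hR y).trans_eq (addHaar_closedBall_center μ y _)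
    _ = μ (closedBall 0 (c + R)) * ν univ := lintegral_const _

end AddHaar

/-- Let `m` be a finite Borel measure on `ℝⁿ` supported in a closed
nonempty set `S`, let `{Q_κ}_{κ ∈ I}` be a Whitney decomposition of `ℝⁿ \ S` (closed
sup-norm cubes with disjoint interiors contained in `Sᶜ` and satisfying
`diam Q_κ ≤ dist(Q_κ, S) ≤ 4 diam Q_κ`) with sup-norm metric projections `x̃_κ` of the
centers, and let `𝓘 = {κ : r_κ ≤ 1}`.  Then for every `c ≥ 1`,
`Σ_{κ ∈ 𝓘} L_n(Q(x̃_κ, r_κ)) · m(Q(x̃_κ, c)) ≤ C(c,n) · m(S)`,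
where the constant `C` depends only on `c` and `n`. -/
theorem statement19 (n : ℕ) (c : ℝ) (hc : 1 ≤ c) :
    ∃ C : ℝ, 0 < C ∧
      ∀ (S : Set (Fin n → ℝ)), IsClosed S → S.Nonempty →
      ∀ (m : Measure (Fin n → ℝ)), IsFiniteMeasure m → m Sᶜ = 0 →
      ∀ (ι : Type) [Countable ι], ∀ (x : ι → (Fin n → ℝ)) (r : ι → ℝ),
        (∀ κ, 0 < r κ) →
        (∀ κ, closedBall (x κ) (r κ) ⊆ Sᶜ) →
        (Pairwise fun κ κ' => Disjoint (ball (x κ) (r κ)) (ball (x κ') (r κ'))) →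
        (∀ κ, ∀ a ∈ closedBall (x κ) (r κ), 2 * r κ ≤ Metric.infDist a S) →
        (∀ κ, ∃ a ∈ closedBall (x κ) (r κ), Metric.infDist a S ≤ 8 * r κ) →
        ∀ x' : ι → (Fin n → ℝ),
          (∀ κ, x' κ ∈ S ∧ dist (x κ) (x' κ) = Metric.infDist (x κ) S) →
          ∑' κ : {κ : ι // r κ ≤ 1},
              volume (closedBall (x' κ.1) (r κ.1)) * m (closedBall (x' κ.1) c)
            ≤ ENNReal.ofReal C * m S := by
  refine ⟨(2 * (c + 10)) ^ n, pow_pos (by linarith) n, ?_⟩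
  intro S _ _ m _ hm ι _ x r hr _ hdisj _ hup x' hx'
  have hR : ∀ κ : {κ : ι // r κ ≤ 1}, dist (x κ) (x' κ) + r κ ≤ 10 := fun κ => by
    obtain ⟨a, ha, hinf⟩ := hup κ
    linarith [dist_le_infDist_add_of_eq_infDist (hx' κ).2 ha, κ.2]
  calc ∑' κ : {κ : ι // r κ ≤ 1},
        volume (closedBall (x' κ.1) (r κ.1)) * m (closedBall (x' κ.1) c)
      ≤ volume (closedBall (0 : Fin n → ℝ) (c + 10)) * m univ :=
        tsum_addHaar_closedBall_mul_le volume m (fun κ => hr κ)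
          (hdisj.comp_of_injective Subtype.val_injective) hR
    _ = ENNReal.ofReal ((2 * (c + 10)) ^ n) * m S := by
        rw [Real.volume_pi_closedBall _ (by linarith), Fintype.card_fin,
          measure_congr (ae_eq_univ.mpr hm)]
end
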